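/- arXiv:2212.09398 — 6 statements merged into one kernel-verified Lean document; each statement's English description precedes it below -/
import Mathlib

section
/- Let $X_1, \ldots, X_p$ be i.i.d. with $P(X_1 = 0) = P(X_1 = 1) = 1/2$ and define $\widetilde{X}_i = 1 - X_i$. Then for each $i$, $\mathrm{cov}(X_i, \widetilde{X}_i) = -E(X_i)^2 = -1/4 < 0$. Consequently $(X, \widetilde{X})$ cannot admit a representation as a conditional independence knockoff pair (since such a representation forces nonnegative covariance). -/
open MeasureTheory ProbabilityTheory
open scoped ENNReal

/-- If `X₁,…,X_p` are i.i.d. Bernoulli(1/2) and `X̃ᵢ = 1 - Xᵢ`, then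
`cov(Xᵢ, X̃ᵢ) = -E(Xᵢ)² = -1/4 < 0`, and consequently `(Xᵢ, X̃ᵢ)` admits no
conditional independence knockoff representation (i.e. there is no random element `Z`
given which `Xᵢ` and `X̃ᵢ` are conditionally independent with the same conditional law). -/
theorem stmt2 {Ω : Type} [MeasurableSpace Ω] [StandardBorelSpace Ω]
    (μ : Measure Ω) [IsProbabilityMeasure μ] (p : ℕ)
    (X Xt : Fin p → Ω → ℝ) (hX : ∀ i, Measurable (X i))
    (hiid : iIndepFun X μ)
    (hlaw : ∀ i, μ.map (X i)
      = (1/2 : ℝ≥0∞) • Measure.dirac (0 : ℝ) + (1/2 : ℝ≥0∞) • Measure.dirac (1 : ℝ))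
    (hXt : ∀ i ω, Xt i ω = 1 - X i ω) (i : Fin p) :
    (∫ ω, X i ω * Xt i ω ∂μ - (∫ ω, X i ω ∂μ) * (∫ ω, Xt i ω ∂μ)
        = -(∫ ω, X i ω ∂μ) ^ 2) ∧
    (∫ ω, X i ω * Xt i ω ∂μ - (∫ ω, X i ω ∂μ) * (∫ ω, Xt i ω ∂μ) = -(1/4)) ∧
    ¬ ∃ (𝒵 : Type) (_ : MeasurableSpace 𝒵) (Z : Ω → 𝒵) (hZ : Measurable Z),
        CondIndepFun (MeasurableSpace.comap Z inferInstance) hZ.comap_le (X i) (Xt i) μ ∧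
        ∀ᵐ z ∂(μ.map Z), condDistrib (X i) Z μ z = condDistrib (Xt i) Z μ z := by
  have hXtm : Measurable (Xt i) := by
    have h : Xt i = fun ω => 1 - X i ω := funext (hXt i)
    rw [h]; exact measurable_const.sub (hX i)
  -- a.e. {0,1}-valued
  have h01 : ∀ᵐ ω ∂μ, X i ω = 0 ∨ X i ω = 1 := by
    have hs : MeasurableSet (({0, 1} : Set ℝ)ᶜ) :=
      (measurableSet_singleton (0:ℝ)).union (measurableSet_singleton 1) |>.compl
    have h0 : μ (X i ⁻¹' ({0, 1} : Set ℝ)ᶜ) = 0 := by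
      have h1 := Measure.map_apply (μ := μ) (hX i) hs
      rw [hlaw i] at h1
      rw [← h1]
      simp [Measure.dirac_apply' _ hs]
    filter_upwards [measure_eq_zero_iff_ae_notMem.mp h0] with ω hω
    simp only [Set.mem_preimage, Set.mem_compl_iff, Set.mem_insert_iff,
      Set.mem_singleton_iff, not_not] at hω
    tauto
  set A : Set Ω := X i ⁻¹' {1} with hA_def
  have hA : MeasurableSet A := hX i (measurableSet_singleton 1)
  have hXeq : X i =ᵐ[μ] A.indicator (fun _ => (1:ℝ)) := by
    filter_upwards [h01] with ω hω
    rcases hω with h | h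
    · have : ω ∉ A := by simp [hA_def, Set.mem_preimage, h]
      simp [Set.indicator_of_notMem this, h]
    · have : ω ∈ A := by simp [hA_def, Set.mem_preimage, h]
      simp [Set.indicator_of_mem this, h]
  have hint : Integrable (X i) μ :=
    ((integrable_const (1:ℝ)).indicator hA).congr hXeq.symm
  have hmuA : μ A = 1/2 := by
    have h1 := Measure.map_apply (μ := μ) (hX i) (measurableSet_singleton (1:ℝ))
    rw [hlaw i] at h1
    rw [hA_def, ← h1]
    simp [Measure.dirac_apply' _ (measurableSet_singleton (1:ℝ))]
  have EX : ∫ ω, X i ω ∂μ = 1/2 := by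
    rw [integral_congr_ae hXeq, integral_indicator_const _ hA, measureReal_def, hmuA]
    simp [ENNReal.toReal_div]
  have EXt : ∫ ω, Xt i ω ∂μ = 1/2 := by
    have h : ∀ ω, Xt i ω = 1 - X i ω := hXt i
    simp only [h]
    rw [integral_sub (integrable_const 1) hint, integral_const, EX]
    simp
    norm_num
  have Eprod : ∫ ω, X i ω * Xt i ω ∂μ = 0 := by
    have : (fun ω => X i ω * Xt i ω) =ᵐ[μ] 0 := by
      filter_upwards [h01] with ω hω
      rcases hω with h | h <;> simp [hXt i ω, h]
    rw [integral_congr_ae this]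
    simp
  refine ⟨by rw [Eprod, EX, EXt]; norm_num, by rw [Eprod, EX, EXt]; norm_num, ?_⟩
  rintro ⟨𝒵, m𝒵, Z, hZ, hCI, hlaweq⟩
  have hm' := hZ.comap_le
  have hintt : Integrable (Xt i) μ := by
    refine ((integrable_const (1:ℝ)).sub hint).congr (ae_of_all _ fun ω => ?_)
    exact (hXt i ω).symm
  -- conditional expectations agree
  have hcd1 : μ[X i|MeasurableSpace.comap Z m𝒵] =ᵐ[μ] fun ω => ∫ y, y ∂condDistrib (X i) Z μ (Z ω) :=
    condExp_ae_eq_integral_condDistrib' hZ hint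
  have hcd2 : μ[Xt i|MeasurableSpace.comap Z m𝒵] =ᵐ[μ] fun ω => ∫ y, y ∂condDistrib (Xt i) Z μ (Z ω) :=
    condExp_ae_eq_integral_condDistrib' hZ hintt
  have hk : ∀ᵐ ω ∂μ, condDistrib (X i) Z μ (Z ω) = condDistrib (Xt i) Z μ (Z ω) :=
    ae_of_ae_map hZ.aemeasurable hlaweq
  have heq : μ[X i|MeasurableSpace.comap Z m𝒵] =ᵐ[μ] μ[Xt i|MeasurableSpace.comap Z m𝒵] := by
    refine hcd1.trans (.trans ?_ hcd2.symm)
    filter_upwards [hk] with ω hω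
    rw [hω]
  -- indicator representations
  set B : Set Ω := Xt i ⁻¹' {1} with hB_def
  have hXteq : Xt i =ᵐ[μ] B.indicator (fun _ => (1:ℝ)) := by
    filter_upwards [h01] with ω hω
    rcases hω with h | h
    · have hB1 : ω ∈ B := by simp [hB_def, Set.mem_preimage, hXt i ω, h]
      simp [Set.indicator_of_mem hB1, hXt i ω, h]
    · have hB1 : ω ∉ B := by simp [hB_def, Set.mem_preimage, hXt i ω, h]
      simp [Set.indicator_of_notMem hB1, hXt i ω, h]
  have hAB : A ∩ B = ∅ := by
    ext ω
    simp only [Set.mem_inter_iff, Set.mem_empty_iff_false, iff_false, hA_def, hB_def,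
      Set.mem_preimage, Set.mem_singleton_iff, hXt i ω]
    rintro ⟨h1, h2⟩
    rw [h1] at h2; norm_num at h2
  have hprod := (condIndepFun_iff_condExp_inter_preimage_eq_mul (hX i) hXtm).mp hCI
    {1} {1} (measurableSet_singleton 1) (measurableSet_singleton 1)
  rw [hAB, ← hA_def, ← hB_def] at hprod
  have hzero : (0 : Ω → ℝ) =ᵐ[μ] fun ω => (μ⟦A|MeasurableSpace.comap Z m𝒵⟧) ω * (μ⟦B|MeasurableSpace.comap Z m𝒵⟧) ω := by
    refine .trans ?_ hprod
    have he : Set.indicator (∅ : Set Ω) (fun _ => (1:ℝ)) = (0 : Ω → ℝ) := by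
      simp only [Set.indicator_empty]
      rfl
    rw [he, condExp_zero]
  have hA' : μ⟦A|MeasurableSpace.comap Z m𝒵⟧ =ᵐ[μ] μ[X i|MeasurableSpace.comap Z m𝒵] := condExp_congr_ae hXeq.symm
  have hB' : μ⟦B|MeasurableSpace.comap Z m𝒵⟧ =ᵐ[μ] μ[Xt i|MeasurableSpace.comap Z m𝒵] := condExp_congr_ae hXteq.symm
  have hsq : ∀ᵐ ω ∂μ, (μ[X i|MeasurableSpace.comap Z m𝒵]) ω = 0 := by
    filter_upwards [hzero, hA', hB', heq] with ω h0 h1 h2 h3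
    have hz : (μ[X i|MeasurableSpace.comap Z m𝒵]) ω * (μ[Xt i|MeasurableSpace.comap Z m𝒵]) ω = 0 := by
      rw [← h1, ← h2]; exact h0.symm
    rw [← h3] at hz
    exact mul_self_eq_zero.mp hz
  have hi : ∫ ω, (μ[X i|MeasurableSpace.comap Z m𝒵]) ω ∂μ = ∫ ω, X i ω ∂μ := integral_condExp hm'
  rw [EX, integral_congr_ae (g := fun _ => (0:ℝ)) hsq, integral_zero] at hi
  norm_num at hi
end

section
/- Let $\mu$ be absolutely continuous on $\mathbb{R}^p$ with a $b$-Lipschitz density $f$, and let $B \subset \mathbb{R}^p$ be a Borel set with $\mu(B^c) < \epsilon/2$ and $0 < m(B) < \infty$ ($m$ = Lebesgue measure). If $\mu_0$ is the convolution of $\mu$ with $\mathcal{N}_p(0, cI)$ where $c = \frac{1}{4p}(\epsilon/(b\, m(B)))^2$, then $d_{TV}(\mu, \mu_0) \le \mu(B^c) + b\, m(B)\sqrt{pc} < \epsilon$. -/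
open MeasureTheory ProbabilityTheory
open scoped ENNReal NNReal

/-- The Gaussian law `𝒩_p(x, cI)` on `ℝ^p` (with the Euclidean norm). -/
noncomputable def gaussE (p : ℕ) (c : ℝ≥0) (x : EuclideanSpace ℝ (Fin p)) :
    Measure (EuclideanSpace ℝ (Fin p)) :=
  (Measure.pi fun i => gaussianReal (x i) c).map (MeasurableEquiv.toLp 2 (Fin p → ℝ))

/-- Total variation distance: sup of `|μ(A) - ν(A)|` over Borel sets `A`. -/
noncomputable def dTV {p : ℕ} (μ ν : Measure (EuclideanSpace ℝ (Fin p))) : ℝ :=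
  ⨆ A : {A : Set (EuclideanSpace ℝ (Fin p)) // MeasurableSet A},
    |(μ A.1).toReal - (ν A.1).toReal|

section aux

open Real

namespace Stmt7Aux

/-! ### One-dimensional gaussian moment computations -/

lemma int_sq_exp {bR : ℝ} (hb : 0 < bR) :
    ∫ x : ℝ, x ^ 2 * Real.exp (-bR * x ^ 2) = (1 / (2 * bR)) * Real.sqrt (π / bR) := by
  have hint2 : Integrable fun x : ℝ => x ^ 2 * Real.exp (-bR * x ^ 2) := by
    have := integrable_rpow_mul_exp_neg_mul_sq hb (s := 2) (by norm_num)
    simpa [Real.rpow_natCast] using this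
  have hint0 : Integrable fun x : ℝ => Real.exp (-bR * x ^ 2) := integrable_exp_neg_mul_sq hb
  have hg : Integrable fun x : ℝ => x * Real.exp (-bR * x ^ 2) := integrable_mul_exp_neg_mul_sq hb
  have hderiv : ∀ x : ℝ, HasDerivAt (fun x : ℝ => x * Real.exp (-bR * x ^ 2))
      (Real.exp (-bR * x ^ 2) - 2 * bR * (x ^ 2 * Real.exp (-bR * x ^ 2))) x := by
    intro x
    have h1 : HasDerivAt (fun x : ℝ => -bR * x ^ 2) (-bR * (2 * x)) x := by
      simpa using ((hasDerivAt_pow 2 x).const_mul (-bR))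
    have := (hasDerivAt_id x).mul h1.exp
    exact this.congr_deriv (by simp only [id]; ring)
  have hzero : ∫ x : ℝ, (Real.exp (-bR * x ^ 2) - 2 * bR * (x ^ 2 * Real.exp (-bR * x ^ 2))) = 0 :=
    integral_eq_zero_of_hasDerivAt_of_integrable hderiv
      (hint0.sub ((hint2.const_mul _))) hg
  rw [integral_sub hint0 (hint2.const_mul _), MeasureTheory.integral_const_mul,
    integral_gaussian] at hzero
  have h2b : (2 * bR) ≠ 0 := by positivity
  field_simp at hzero ⊢
  linarith

lemma integral_sq_gaussianReal {c : ℝ≥0} (hc : c ≠ 0) :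
    ∫ x : ℝ, x ^ 2 ∂(gaussianReal 0 c) = c := by
  rw [gaussianReal_of_var_ne_zero 0 hc]
  have hmeas : Measurable fun x : ℝ => (gaussianPDFReal 0 c x).toNNReal :=
    (measurable_gaussianPDFReal 0 c).real_toNNReal
  rw [show (gaussianPDF 0 c) = fun x => ((gaussianPDFReal 0 c x).toNNReal : ℝ≥0∞) from rfl]
  rw [integral_withDensity_eq_integral_smul hmeas]
  have hcpos : (0:ℝ) < c := lt_of_le_of_ne c.coe_nonneg (by exact_mod_cast hc.symm)
  have h2c : (0:ℝ) < 2 * π * c := by positivity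
  have hb : (0:ℝ) < (2*(c:ℝ))⁻¹ := by positivity
  have hpdf : ∀ x : ℝ, (gaussianPDFReal 0 c x).toNNReal • (x ^ 2)
      = (Real.sqrt (2 * π * c))⁻¹ * (x ^ 2 * Real.exp (-(2*(c:ℝ))⁻¹ * x ^ 2)) := by
    intro x
    rw [NNReal.smul_def, smul_eq_mul, Real.coe_toNNReal _ (gaussianPDFReal_nonneg 0 c x),
      gaussianPDFReal]
    rw [show - (x - 0)^2 / (2 * (c:ℝ)) = -(2*(c:ℝ))⁻¹ * x ^ 2 by field_simp; ring]
    ring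
  simp only [hpdf]
  rw [MeasureTheory.integral_const_mul, int_sq_exp hb]
  rw [show π / (2*(c:ℝ))⁻¹ = 2 * π * c by field_simp]
  rw [show (1:ℝ) / (2 * (2*(c:ℝ))⁻¹) = c by field_simp]
  have hs : Real.sqrt (2 * π * c) ≠ 0 := by positivity
  field_simp

lemma integrable_sq_gaussianReal {c : ℝ≥0} (hc : c ≠ 0) :
    Integrable (fun x : ℝ => x ^ 2) (gaussianReal 0 c) := by
  rw [gaussianReal_of_var_ne_zero 0 hc]
  rw [show (gaussianPDF 0 c) = fun x => ((gaussianPDFReal 0 c x).toNNReal : ℝ≥0∞) from rfl]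
  rw [integrable_withDensity_iff_integrable_smul
    ((measurable_gaussianPDFReal 0 c).real_toNNReal)]
  have hcpos : (0:ℝ) < c := lt_of_le_of_ne c.coe_nonneg (by exact_mod_cast Ne.symm hc)
  have hb : (0:ℝ) < (2*(c:ℝ))⁻¹ := by positivity
  have h2 : Integrable fun x : ℝ => x ^ 2 * Real.exp (-(2*(c:ℝ))⁻¹ * x ^ 2) := by
    have := integrable_rpow_mul_exp_neg_mul_sq hb (s := 2) (by norm_num)
    simpa [Real.rpow_natCast] using this
  refine (h2.const_mul ((Real.sqrt (2 * π * c))⁻¹)).congr (Filter.Eventually.of_forall ?_)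
  intro x
  symm
  simp only [NNReal.smul_def, smul_eq_mul]
  rw [Real.coe_toNNReal _ (gaussianPDFReal_nonneg 0 c x), gaussianPDFReal]
  rw [show - (x - 0)^2 / (2 * (c:ℝ)) = -(2*(c:ℝ))⁻¹ * x ^ 2 by field_simp; ring]
  ring

/-! ### Structure of `gaussE` -/

instance gaussE_prob (p : ℕ) (c : ℝ≥0) (x : EuclideanSpace ℝ (Fin p)) :
    IsProbabilityMeasure (gaussE p c x) := by
  unfold gaussE
  exact Measure.isProbabilityMeasure_map (MeasurableEquiv.measurable _).aemeasurable

lemma gaussE_translate (p : ℕ) (c : ℝ≥0) (x : EuclideanSpace ℝ (Fin p)) :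
    gaussE p c x = (gaussE p c 0).map (fun y => x + y) := by
  have hT : MeasurePreserving (fun (z : Fin p → ℝ) i => x i + z i)
      (Measure.pi fun _ => gaussianReal 0 c) (Measure.pi fun i => gaussianReal (x i) c) := by
    refine measurePreserving_pi _ _ (fun i => ⟨measurable_const_add _, ?_⟩)
    rw [gaussianReal_map_const_add]
    norm_num
  have he : Measurable (MeasurableEquiv.toLp 2 (Fin p → ℝ)) :=
    MeasurableEquiv.measurable _
  have hadd : Measurable (fun y : EuclideanSpace ℝ (Fin p) => x + y) := measurable_const_add x
  unfold gaussE
  rw [← hT.map_eq, Measure.map_map he hT.measurable, Measure.map_map hadd he]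
  congr 1

lemma gaussE_apply (p : ℕ) (c : ℝ≥0) (x : EuclideanSpace ℝ (Fin p))
    {A : Set (EuclideanSpace ℝ (Fin p))} (hA : MeasurableSet A) :
    gaussE p c x A = gaussE p c 0 {y | x + y ∈ A} := by
  rw [gaussE_translate, Measure.map_apply (measurable_const_add x) hA]
  rfl

lemma gaussE_measurable (p : ℕ) (c : ℝ≥0) : Measurable (gaussE p c) := by
  refine Measure.measurable_of_measurable_coe _ (fun s hs => ?_)
  simp only [fun x => gaussE_apply p c x hs]
  have hS : MeasurableSet {q : EuclideanSpace ℝ (Fin p) × EuclideanSpace ℝ (Fin p) |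
      q.1 + q.2 ∈ s} := measurable_add hs
  exact measurable_measure_prodMk_left hS

lemma bind_gaussE_apply (p : ℕ) (c : ℝ≥0) (μ : Measure (EuclideanSpace ℝ (Fin p)))
    [IsFiniteMeasure μ] {A : Set (EuclideanSpace ℝ (Fin p))} (hA : MeasurableSet A) :
    μ.bind (gaussE p c) A = ∫⁻ y, μ ((· + y) ⁻¹' A) ∂(gaussE p c 0) := by
  rw [Measure.bind_apply hA (gaussE_measurable p c).aemeasurable]
  have h1 : ∀ x, gaussE p c x A = ∫⁻ y, A.indicator (fun _ => (1:ℝ≥0∞)) (x + y) ∂(gaussE p c 0) := by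
    intro x
    rw [gaussE_apply p c x hA]
    rw [← lintegral_indicator_one (by exact measurable_const_add x hA)]
    rfl
  simp only [h1]
  have hS : MeasurableSet {q : EuclideanSpace ℝ (Fin p) × EuclideanSpace ℝ (Fin p) |
      q.1 + q.2 ∈ A} := measurable_add hA
  rw [lintegral_lintegral_swap]
  · refine lintegral_congr (fun y => ?_)
    rw [← lintegral_indicator_one (by exact measurable_add_const y hA)]
    rfl
  · have : Measurable (fun q : EuclideanSpace ℝ (Fin p) × EuclideanSpace ℝ (Fin p) =>
        A.indicator (fun _ => (1:ℝ≥0∞)) (q.1 + q.2)) :=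
      measurable_one.indicator hS
    exact this.aemeasurable

/-! ### Moments of `gaussE p c 0` -/

variable {p : ℕ} {c : ℝ≥0}

lemma pi_map_eval {ι : Type*} [Fintype ι] [DecidableEq ι] {α : ι → Type*}
    [∀ i, MeasurableSpace (α i)]
    (μs : ∀ i, Measure (α i)) [∀ i, IsProbabilityMeasure (μs i)] (i : ι) :
    (Measure.pi μs).map (Function.eval i) = μs i := by
  ext s hs
  rw [Measure.map_apply (measurable_pi_apply i) hs, Set.eval_preimage, Measure.pi_pi]
  refine Fintype.prod_eq_single i (fun j hj => ?_) |>.trans (by rw [Function.update_self])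
  rw [Function.update_of_ne hj]
  exact measure_univ

lemma integral_eval_sq (hc : c ≠ 0) (i : Fin p) :
    ∫ z : Fin p → ℝ, (z i) ^ 2 ∂(Measure.pi fun _ => gaussianReal 0 c) = c := by
  have h := integral_map (μ := Measure.pi fun _ : Fin p => gaussianReal 0 c)
    (φ := Function.eval i) (measurable_pi_apply i).aemeasurable
    (f := fun x : ℝ => x ^ 2) ((continuous_pow 2).aestronglyMeasurable)
  rw [pi_map_eval] at h
  rw [← h, integral_sq_gaussianReal hc]

lemma integrable_eval_sq (hc : c ≠ 0) (i : Fin p) :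
    Integrable (fun z : Fin p → ℝ => (z i) ^ 2) (Measure.pi fun _ => gaussianReal 0 c) := by
  have h := integrable_sq_gaussianReal hc
  rw [← pi_map_eval (fun _ : Fin p => gaussianReal 0 c) i] at h
  exact (integrable_map_measure (μ := Measure.pi fun _ : Fin p => gaussianReal 0 c)
    (f := Function.eval i) (g := fun x : ℝ => x ^ 2)
    ((continuous_pow 2).aestronglyMeasurable) (measurable_pi_apply i).aemeasurable).mp h

lemma integral_normsq_gaussE (hc : c ≠ 0) :
    (∫ y, ‖y‖ ^ 2 ∂(gaussE p c 0)) = p * c := by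
  unfold gaussE
  rw [MeasureTheory.integral_map_equiv]
  have hnorm : ∀ z : Fin p → ℝ,
      ‖(MeasurableEquiv.toLp 2 (Fin p → ℝ)) z‖ ^ 2 = ∑ i, (z i) ^ 2 := by
    intro z
    rw [EuclideanSpace.norm_eq]
    rw [Real.sq_sqrt (Finset.sum_nonneg fun i _ => sq_nonneg _)]
    simp only [Real.norm_eq_abs, sq_abs]
    rfl
  calc (∫ z : Fin p → ℝ, ‖(MeasurableEquiv.toLp 2 (Fin p → ℝ)) z‖ ^ 2
        ∂(Measure.pi fun i => gaussianReal ((0 : EuclideanSpace ℝ (Fin p)) i) c))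
      = ∫ z : Fin p → ℝ, ∑ i, (z i) ^ 2 ∂(Measure.pi fun _ => gaussianReal 0 c) := by
        simp only [hnorm]; rfl
    _ = ∑ i : Fin p, ∫ z : Fin p → ℝ, (z i) ^ 2 ∂(Measure.pi fun _ => gaussianReal 0 c) :=
        integral_finset_sum _ (fun i _ => integrable_eval_sq hc i)
    _ = p * c := by simp [integral_eval_sq hc, Finset.sum_const]

lemma integrable_normsq_gaussE (hc : c ≠ 0) :
    Integrable (fun y => ‖y‖ ^ 2) (gaussE p c 0) := by
  unfold gaussE
  rw [MeasureTheory.integrable_map_equiv]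
  have : Integrable (fun z : Fin p → ℝ => ∑ i, (z i) ^ 2)
      (Measure.pi fun _ => gaussianReal 0 c) :=
    integrable_finset_sum _ (fun i _ => integrable_eval_sq hc i)
  refine this.congr (Filter.Eventually.of_forall fun z => ?_)
  show ∑ i, (z i) ^ 2 = ‖(MeasurableEquiv.toLp 2 (Fin p → ℝ)) z‖ ^ 2
  rw [EuclideanSpace.norm_eq, Real.sq_sqrt (Finset.sum_nonneg fun i _ => sq_nonneg _)]
  simp only [Real.norm_eq_abs, sq_abs]
  rfl

lemma integrable_norm_gaussE (hc : c ≠ 0) : Integrable (fun y => ‖y‖) (gaussE p c 0) := by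
  have h1 : Integrable (fun y : EuclideanSpace ℝ (Fin p) => 1 + ‖y‖ ^ 2) (gaussE p c 0) :=
    (integrable_const 1).add (integrable_normsq_gaussE hc)
  refine h1.mono' (continuous_norm.aestronglyMeasurable) (Filter.Eventually.of_forall fun y => ?_)
  rw [Real.norm_eq_abs, abs_of_nonneg (norm_nonneg y)]
  nlinarith [norm_nonneg y, sq_nonneg (1 - ‖y‖)]

lemma integral_norm_gaussE_le (hc : c ≠ 0) :
    (∫ y, ‖y‖ ∂(gaussE p c 0)) ≤ Real.sqrt (p * c) := by
  have hmem : MemLp (fun y : EuclideanSpace ℝ (Fin p) => ‖y‖) 2 (gaussE p c 0) := by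
    rw [memLp_two_iff_integrable_sq continuous_norm.aestronglyMeasurable]
    exact integrable_normsq_gaussE hc
  have hvar := variance_nonneg (fun y : EuclideanSpace ℝ (Fin p) => ‖y‖) (gaussE p c 0)
  rw [variance_eq_sub hmem] at hvar
  have h2 : (∫ y, ‖y‖ ∂(gaussE p c 0)) ^ 2 ≤ p * c := by
    have h3 : (∫ y, ‖y‖ ^ 2 ∂(gaussE p c 0)) = p * c := integral_normsq_gaussE hc
    simp only [Pi.pow_apply] at hvar
    nlinarith [hvar, h3]
  have h0 : 0 ≤ ∫ y, ‖y‖ ∂(gaussE p c 0) := integral_nonneg (fun y => norm_nonneg y)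
  exact (Real.le_sqrt h0 (by positivity)).mpr h2

/-! ### The key Lipschitz estimate -/

lemma mu_set_toReal (f : EuclideanSpace ℝ (Fin p) → ℝ) (hf0 : ∀ x, 0 ≤ f x)
    (hcont : Continuous f) {S : Set (EuclideanSpace ℝ (Fin p))} (hS : MeasurableSet S) :
    ((volume.withDensity fun x => ENNReal.ofReal (f x)) S).toReal = ∫ x in S, f x := by
  rw [withDensity_apply _ hS,
    integral_eq_lintegral_of_nonneg_ae (Filter.Eventually.of_forall hf0)
      hcont.aestronglyMeasurable.restrict]

lemma key_estimate (f : EuclideanSpace ℝ (Fin p) → ℝ) (hf0 : ∀ x, 0 ≤ f x) (b : ℝ≥0)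
    (hLip : LipschitzWith b f) (hint : Integrable f volume)
    {B : Set (EuclideanSpace ℝ (Fin p))} (hB : MeasurableSet B) (hBfin : volume B < ∞)
    {A : Set (EuclideanSpace ℝ (Fin p))} (hA : MeasurableSet A)
    (y : EuclideanSpace ℝ (Fin p)) :
    ((volume.withDensity fun x => ENNReal.ofReal (f x)) A).toReal
      - ((volume.withDensity fun x => ENNReal.ofReal (f x)) ((· + y) ⁻¹' A)).toReal
      ≤ b * (volume B).toReal * ‖y‖
        + ((volume.withDensity fun x => ENNReal.ofReal (f x)) Bᶜ).toReal := by
  set μ := volume.withDensity fun x => ENNReal.ofReal (f x) with hμ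
  have hcont : Continuous f := hLip.continuous
  have hiy : Integrable (fun u => f (u - y)) volume := by
    have h := ((measurePreserving_sub_right
        (volume : Measure (EuclideanSpace ℝ (Fin p))) y).integrable_comp
        hcont.aestronglyMeasurable).mpr hint
    exact h
  have htrans : (μ ((· + y) ⁻¹' A)).toReal = ∫ u in A, f (u - y) := by
    rw [mu_set_toReal f hf0 hcont (measurable_add_const y hA)]
    rw [← integral_indicator (measurable_add_const y hA), ← integral_indicator hA]
    have hpt : ∀ x, ((· + y) ⁻¹' A).indicator f x
        = (A.indicator fun u => f (u - y)) (x + y) := by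
      intro x
      by_cases h : x + y ∈ A
      · rw [Set.indicator_of_mem h, Set.indicator_of_mem (by exact h), add_sub_cancel_right]
      · rw [Set.indicator_of_notMem h, Set.indicator_of_notMem (by exact h)]
    simp only [hpt]
    exact integral_add_right_eq_self (A.indicator fun u => f (u - y)) y
  have hfA : (μ A).toReal = ∫ u in A, f u := mu_set_toReal f hf0 hcont hA
  have hsub : (μ A).toReal - (μ ((· + y) ⁻¹' A)).toReal
      = ∫ u in A, (f u - f (u - y)) := by
    rw [hfA, htrans, integral_sub hint.integrableOn hiy.integrableOn]
  rw [hsub]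
  have hABm : MeasurableSet (A ∩ B) := hA.inter hB
  have hABCm : MeasurableSet (A ∩ Bᶜ) := hA.inter hB.compl
  have hdisj : Disjoint (A ∩ B) (A ∩ Bᶜ) :=
    disjoint_compl_right.mono Set.inter_subset_right Set.inter_subset_right
  have hunion : (A ∩ B) ∪ (A ∩ Bᶜ) = A := by
    rw [← Set.inter_union_distrib_left, Set.union_compl_self, Set.inter_univ]
  have hio : ∀ S : Set (EuclideanSpace ℝ (Fin p)),
      IntegrableOn (fun u => f u - f (u - y)) S volume :=
    fun S => (hint.sub hiy).integrableOn
  have hsplit : ∫ u in A, (f u - f (u - y))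
      = (∫ u in A ∩ B, (f u - f (u - y))) + ∫ u in A ∩ Bᶜ, (f u - f (u - y)) := by
    conv_lhs => rw [← hunion]
    exact setIntegral_union hdisj hABCm (hio _) (hio _)
  rw [hsplit]
  have hABfin : volume (A ∩ B) < ∞ :=
    lt_of_le_of_lt (measure_mono Set.inter_subset_right) hBfin
  have hb1 : (∫ u in A ∩ B, (f u - f (u - y))) ≤ (b : ℝ) * (volume B).toReal * ‖y‖ := by
    have hpt : ∀ u ∈ A ∩ B, f u - f (u - y) ≤ (b : ℝ) * ‖y‖ := by
      intro u _
      have h1 : dist (f u) (f (u - y)) ≤ (b : ℝ) * dist u (u - y) := hLip.dist_le_mul u (u - y)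
      have h2 : dist u (u - y) = ‖y‖ := by
        rw [dist_eq_norm]; simp
      rw [h2] at h1
      calc f u - f (u - y) ≤ |f u - f (u - y)| := le_abs_self _
        _ = dist (f u) (f (u - y)) := (Real.dist_eq _ _).symm
        _ ≤ (b : ℝ) * ‖y‖ := h1
    calc (∫ u in A ∩ B, (f u - f (u - y)))
        ≤ ∫ _ in A ∩ B, (b : ℝ) * ‖y‖ :=
          setIntegral_mono_on (hio _)
            (integrableOn_const hABfin.ne) hABm hpt
      _ = (volume (A ∩ B)).toReal * ((b : ℝ) * ‖y‖) := by
          rw [setIntegral_const, smul_eq_mul, measureReal_def]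
      _ ≤ (volume B).toReal * ((b : ℝ) * ‖y‖) := by
          refine mul_le_mul_of_nonneg_right ?_ (by positivity)
          exact ENNReal.toReal_le_toReal hABfin.ne hBfin.ne |>.mpr
            (measure_mono Set.inter_subset_right)
      _ = (b : ℝ) * (volume B).toReal * ‖y‖ := by ring
  have hb2 : (∫ u in A ∩ Bᶜ, (f u - f (u - y))) ≤ (μ Bᶜ).toReal := by
    calc (∫ u in A ∩ Bᶜ, (f u - f (u - y)))
        ≤ ∫ u in A ∩ Bᶜ, f u :=
          setIntegral_mono (hio _) hint.integrableOn
            (fun u => sub_le_self _ (hf0 _))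
      _ ≤ ∫ u in Bᶜ, f u := by
          refine setIntegral_mono_set hint.integrableOn
            (Filter.Eventually.of_forall hf0) ?_
          exact HasSubset.Subset.eventuallyLE Set.inter_subset_right
      _ = (μ Bᶜ).toReal := (mu_set_toReal f hf0 hcont hB.compl).symm
  linarith

end Stmt7Aux

end aux

/-- If `μ` has a `b`-Lipschitz density `f`, `B` is Borel with `μ(Bᶜ) < ε/2` and
`0 < m(B) < ∞`, and `μ₀` is the convolution of `μ` with `𝒩_p(0, cI)` where
`c = (1/(4p)) (ε/(b m(B)))²`, then `d_TV(μ, μ₀) ≤ μ(Bᶜ) + b m(B) √(pc) < ε`. -/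
theorem stmt7 (p : ℕ) (hp : 0 < p) (f : EuclideanSpace ℝ (Fin p) → ℝ)
    (hf0 : ∀ x, 0 ≤ f x) (b : ℝ≥0) (hb : 0 < b) (hLip : LipschitzWith b f)
    (μ : Measure (EuclideanSpace ℝ (Fin p)))
    (hμ : μ = volume.withDensity fun x => ENNReal.ofReal (f x)) [IsProbabilityMeasure μ]
    (ε : ℝ) (hε : 0 < ε) (B : Set (EuclideanSpace ℝ (Fin p))) (hB : MeasurableSet B)
    (hBsmall : (μ Bᶜ).toReal < ε / 2) (hB0 : 0 < volume B) (hBfin : volume B < ∞)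
    (c : ℝ≥0) (hc : (c : ℝ) = (1 / (4 * p)) * (ε / (b * (volume B).toReal)) ^ 2) :
    dTV μ (μ.bind (gaussE p c))
        ≤ (μ Bᶜ).toReal + b * (volume B).toReal * Real.sqrt (p * c) ∧
      (μ Bᶜ).toReal + b * (volume B).toReal * Real.sqrt (p * c) < ε := by
  open Stmt7Aux in
  -- basic numeric facts
  have hmB : 0 < (volume B).toReal := ENNReal.toReal_pos hB0.ne' hBfin.ne
  set mB := (volume B).toReal with hmBdef
  have hbm : 0 < (b : ℝ) * mB := by positivity
  have hcpos : (0:ℝ) < c := by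
    rw [hc]
    have : 0 < ε / ((b:ℝ) * mB) := div_pos hε hbm
    have hp' : (0:ℝ) < p := by exact_mod_cast hp
    positivity
  have hc0 : c ≠ 0 := by
    intro h
    rw [h] at hcpos
    simp at hcpos
  -- √(p c) computation
  have hpc : (p : ℝ) * c = (ε / ((b:ℝ) * mB) / 2) ^ 2 := by
    have hp' : (0:ℝ) < p := by exact_mod_cast hp
    rw [hc]
    field_simp
    ring
  have hsqrt : Real.sqrt (p * c) = ε / ((b:ℝ) * mB) / 2 := by
    rw [hpc, Real.sqrt_sq (by positivity)]
  have hhalf : (b : ℝ) * mB * Real.sqrt (p * c) = ε / 2 := by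
    rw [hsqrt]
    field_simp
  have hlt : (μ Bᶜ).toReal + (b : ℝ) * mB * Real.sqrt (p * c) < ε := by
    rw [hhalf]; linarith
  refine ⟨?_, hlt⟩
  -- integrability of the density
  have hcont : Continuous f := hLip.continuous
  have hint : Integrable f volume := by
    refine ⟨hcont.aestronglyMeasurable, ?_⟩
    rw [hasFiniteIntegral_iff_norm]
    have h1 : ∀ x, ENNReal.ofReal ‖f x‖ = ENNReal.ofReal (f x) := by
      intro x; rw [Real.norm_eq_abs, abs_of_nonneg (hf0 x)]
    simp only [h1]
    have h2 : (∫⁻ x, ENNReal.ofReal (f x)) = μ Set.univ := by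
      rw [hμ, withDensity_apply _ MeasurableSet.univ, Measure.restrict_univ]
    rw [h2, measure_univ]
    exact ENNReal.one_lt_top
  -- μ₀ is a probability measure
  set γ := gaussE p c 0 with hγdef
  have hμ0univ : μ.bind (gaussE p c) Set.univ = 1 := by
    rw [bind_gaussE_apply p c μ MeasurableSet.univ]
    simp
  have hμ0prob : IsProbabilityMeasure (μ.bind (gaussE p c)) := ⟨hμ0univ⟩
  -- one-sided estimate
  have one_sided : ∀ A : Set (EuclideanSpace ℝ (Fin p)), MeasurableSet A →
      (μ A).toReal - (μ.bind (gaussE p c) A).toReal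
        ≤ (μ Bᶜ).toReal + (b : ℝ) * mB * Real.sqrt (p * c) := by
    intro A hA
    have hmeasfun : Measurable fun y : EuclideanSpace ℝ (Fin p) => μ ((· + y) ⁻¹' A) := by
      have hS : MeasurableSet {q : EuclideanSpace ℝ (Fin p) × EuclideanSpace ℝ (Fin p) |
          q.2 + q.1 ∈ A} := (measurable_snd.add measurable_fst) hA
      exact measurable_measure_prodMk_left hS
    have h1 : (μ.bind (gaussE p c) A).toReal = ∫ y, (μ ((· + y) ⁻¹' A)).toReal ∂γ := by
      rw [bind_gaussE_apply p c μ hA, ← integral_toReal hmeasfun.aemeasurable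
        (Filter.Eventually.of_forall fun y => measure_lt_top μ _)]
    have h2 : (μ A).toReal = ∫ _ : EuclideanSpace ℝ (Fin p), (μ A).toReal ∂γ := by
      rw [integral_const]; simp
    have hI1 : Integrable (fun y => (μ ((· + y) ⁻¹' A)).toReal) γ := by
      refine Integrable.mono' (integrable_const 1)
        (ENNReal.measurable_toReal.comp hmeasfun).aestronglyMeasurable
        (Filter.Eventually.of_forall fun y => ?_)
      rw [Real.norm_eq_abs, abs_of_nonneg ENNReal.toReal_nonneg]
      calc (μ ((· + y) ⁻¹' A)).toReal ≤ (μ Set.univ).toReal := by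
            refine ENNReal.toReal_le_toReal (measure_lt_top μ _).ne (measure_lt_top μ _).ne |>.mpr
              (measure_mono (Set.subset_univ _))
        _ = 1 := by rw [measure_univ]; rfl
    have hInorm : Integrable (fun y : EuclideanSpace ℝ (Fin p) => ‖y‖) γ :=
      integrable_norm_gaussE hc0
    have hI2 : Integrable (fun y : EuclideanSpace ℝ (Fin p) =>
        (b : ℝ) * mB * ‖y‖ + (μ Bᶜ).toReal) γ :=
      (hInorm.const_mul _).add (integrable_const _)
    have hpt : ∀ y : EuclideanSpace ℝ (Fin p),
        (μ A).toReal - (μ ((· + y) ⁻¹' A)).toReal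
          ≤ (b : ℝ) * mB * ‖y‖ + (μ Bᶜ).toReal := by
      intro y
      have := key_estimate f hf0 b hLip hint hB hBfin hA y
      rw [← hμ] at this
      linarith [this]
    calc (μ A).toReal - (μ.bind (gaussE p c) A).toReal
        = ∫ y, ((μ A).toReal - (μ ((· + y) ⁻¹' A)).toReal) ∂γ := by
          rw [integral_sub (integrable_const _) hI1, ← h2, ← h1]
      _ ≤ ∫ y, ((b : ℝ) * mB * ‖y‖ + (μ Bᶜ).toReal) ∂γ := by
          refine integral_mono ((integrable_const _).sub hI1) hI2 ?_
          intro y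
          exact hpt y
      _ = (b : ℝ) * mB * (∫ y, ‖y‖ ∂γ) + (μ Bᶜ).toReal := by
          rw [integral_add (hInorm.const_mul _) (integrable_const _),
            MeasureTheory.integral_const_mul, integral_const]
          simp
      _ ≤ (b : ℝ) * mB * Real.sqrt (p * c) + (μ Bᶜ).toReal := by
          have := integral_norm_gaussE_le (p := p) hc0
          have hb' : (0:ℝ) ≤ (b : ℝ) * mB := le_of_lt hbm
          nlinarith [mul_le_mul_of_nonneg_left this hb']
      _ = (μ Bᶜ).toReal + (b : ℝ) * mB * Real.sqrt (p * c) := by ring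
  -- complements
  have hcompl : ∀ A : Set (EuclideanSpace ℝ (Fin p)), MeasurableSet A →
      (μ.bind (gaussE p c) A).toReal - (μ A).toReal
        = (μ Aᶜ).toReal - (μ.bind (gaussE p c) Aᶜ).toReal := by
    intro A hA
    have e1 : (μ Aᶜ).toReal = 1 - (μ A).toReal := by
      rw [measure_compl hA (measure_lt_top μ _).ne, measure_univ,
        ENNReal.toReal_sub_of_le prob_le_one ENNReal.one_ne_top]
      simp
    have e2 : (μ.bind (gaussE p c) Aᶜ).toReal = 1 - (μ.bind (gaussE p c) A).toReal := by
      rw [measure_compl hA (measure_lt_top _ _).ne, hμ0univ,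
        ENNReal.toReal_sub_of_le ?hle ENNReal.one_ne_top]
      · simp
      · rw [← hμ0univ]; exact measure_mono (Set.subset_univ _)
    rw [e1, e2]
    ring
  -- conclude
  unfold dTV
  have hne : Nonempty {A : Set (EuclideanSpace ℝ (Fin p)) // MeasurableSet A} :=
    ⟨⟨∅, MeasurableSet.empty⟩⟩
  refine ciSup_le fun A => ?_
  rw [abs_sub_le_iff]
  constructor
  · exact one_sided A.1 A.2
  · rw [hcompl A.1 A.2]
    exact one_sided A.1ᶜ A.2.compl
end

section
/- In the setting of binary covariates conditionally i.i.d.-structured given $\lambda \sim \mathrm{Unif}(0,1)$ with $P(X_i=1\mid\lambda)=\lambda c_i$, and $\widetilde{X}$ the conditional independence knockoff (i.e. $X_1,\ldots,X_p,\widetilde{X}_1,\ldots,\widetilde{X}_p$ conditionally independent given $\lambda$ with $P(\widetilde{X}_i=1\mid\lambda)=\lambda c_i$), one has for $x, \widetilde{x} \in \{0,1\}^p$: $P(X = x, \widetilde{X} = \widetilde{x}) = \prod_{i\in S} c_i \prod_{i\in T} c_i \sum_{j=0}^{p-s} \sum_{k=0}^{p-t} (-1)^{j+k} \frac{d_j e_k}{j+k+s+t+1}$,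 where $S, s, d_j$ are defined from $x$ and $T, t, e_k$ analogously from $\widetilde{x}$. -/
open MeasureTheory ProbabilityTheory
open scoped ENNReal NNReal

private lemma pow_ite_aux {a b : ℝ} {n : ℕ} (h : n ≤ 1) :
    a ^ n * b ^ (1 - n) = if n = 1 then a else b := by
  interval_cases n <;> simp

private lemma prod_one_sub_expand {p : ℕ} (c : Fin p → ℝ) (U : Finset (Fin p)) (l : ℝ) :
    ∏ i ∈ U, (1 - l * c i) = ∑ j ∈ Finset.range (U.card + 1),
      (-1:ℝ) ^ j * (∑ A ∈ Finset.powersetCard j U, ∏ i ∈ A, c i) * l ^ j := by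
  have h : ∀ i ∈ U, (1 - l * c i) = (-(l * c i)) + 1 := fun i _ => by ring
  rw [Finset.prod_congr rfl h, Finset.prod_add]
  rw [Finset.powerset_card_disjiUnion]
  erw [Finset.sum_disjiUnion]
  refine Finset.sum_congr rfl fun j hj => ?_
  have : ∀ A ∈ Finset.powersetCard j U,
      (∏ i ∈ A, -(l * c i)) * ∏ _i ∈ U \ A, (1:ℝ)
        = (-1:ℝ) ^ j * l ^ j * ∏ i ∈ A, c i := by
    intro A hA
    obtain ⟨-, hcard⟩ := Finset.mem_powersetCard.mp hA
    rw [Finset.prod_const_one, mul_one]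
    calc ∏ i ∈ A, -(l * c i) = ∏ i ∈ A, ((-l) * c i) := by
          refine Finset.prod_congr rfl fun i _ => by ring
      _ = (-l) ^ A.card * ∏ i ∈ A, c i := by
          rw [Finset.prod_mul_distrib, Finset.prod_const]
      _ = (-1:ℝ) ^ j * l ^ j * ∏ i ∈ A, c i := by
          rw [hcard, neg_pow]
  rw [Finset.sum_congr rfl this, ← Finset.mul_sum]
  ring

private lemma integral_pow_Ioo (n : ℕ) :
    ∫ l in Set.Ioo (0:ℝ) 1, l ^ n = 1 / (n + 1) := by
  rw [← MeasureTheory.integral_Ioc_eq_integral_Ioo,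
    ← intervalIntegral.integral_of_le (zero_le_one), integral_pow]
  simp [Nat.succ_ne_zero]

/-- Binary covariates `X` and their conditional independence knockoff `X̃`:
`X₁,…,X_p, X̃₁,…,X̃_p` conditionally independent given `λ ∼ Unif(0,1)` with
`P(Xᵢ = 1 ∣ λ) = P(X̃ᵢ = 1 ∣ λ) = λ cᵢ`, so that the joint law is
`P(X = x, X̃ = x̃) = ∫₀¹ ∏ᵢ (λcᵢ)^{xᵢ}(1-λcᵢ)^{1-xᵢ}(λcᵢ)^{x̃ᵢ}(1-λcᵢ)^{1-x̃ᵢ} dλ`.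
Then `P(X = x, X̃ = x̃) = ∏_{i∈S} cᵢ ∏_{i∈T} cᵢ ∑ⱼ∑ₖ (-1)^{j+k} dⱼeₖ/(j+k+s+t+1)`. -/
theorem stmt12 {Ω : Type} [MeasurableSpace Ω] (μ : Measure Ω) [IsProbabilityMeasure μ]
    (p : ℕ) (c : Fin p → ℝ) (hc : ∀ i, c i ∈ Set.Ioo (0:ℝ) 1)
    (Λ : Ω → ℝ) (hΛ : Measurable Λ) (hΛlaw : μ.map Λ = volume.restrict (Set.Ioo (0:ℝ) 1))
    (X Xt : Fin p → Ω → ℕ) (hX : ∀ i, Measurable (X i)) (hXt : ∀ i, Measurable (Xt i))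
    (hjoint : ∀ y yt : Fin p → ℕ, (∀ i, y i ≤ 1) → (∀ i, yt i ≤ 1) →
      μ {ω | (∀ i, X i ω = y i) ∧ ∀ i, Xt i ω = yt i}
        = ENNReal.ofReal (∫ l in Set.Ioo (0:ℝ) 1,
            ∏ i, (l * c i) ^ (y i) * (1 - l * c i) ^ (1 - y i) *
              ((l * c i) ^ (yt i) * (1 - l * c i) ^ (1 - yt i))))
    (x xt : Fin p → ℕ) (hx : ∀ i, x i ≤ 1) (hxt : ∀ i, xt i ≤ 1) :
    (μ {ω | (∀ i, X i ω = x i) ∧ ∀ i, Xt i ω = xt i}).toReal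
      = (∏ i ∈ Finset.univ.filter fun i => x i = 1, c i) *
        (∏ i ∈ Finset.univ.filter fun i => xt i = 1, c i) *
        ∑ j ∈ Finset.range (p - (Finset.univ.filter fun i => x i = 1).card + 1),
          ∑ k ∈ Finset.range (p - (Finset.univ.filter fun i => xt i = 1).card + 1),
            (-1 : ℝ) ^ (j + k) *
              ((∑ T ∈ Finset.powersetCard j
                    (Finset.univ \ Finset.univ.filter fun i => x i = 1),
                  ∏ i ∈ T, c i) *
               (∑ T ∈ Finset.powersetCard k
                    (Finset.univ \ Finset.univ.filter fun i => xt i = 1),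
                  ∏ i ∈ T, c i)) /
              (j + k + (Finset.univ.filter fun i => x i = 1).card
                + (Finset.univ.filter fun i => xt i = 1).card + 1) := by
  classical
  -- abbreviations
  set S : Finset (Fin p) := Finset.univ.filter fun i => x i = 1 with hS
  set T : Finset (Fin p) := Finset.univ.filter fun i => xt i = 1 with hT
  -- single-vector expansion
  have key : ∀ (y : Fin p → ℕ), (∀ i, y i ≤ 1) → ∀ l : ℝ,
      (∏ i, (l * c i) ^ (y i) * (1 - l * c i) ^ (1 - y i))
        = l ^ (Finset.univ.filter fun i => y i = 1).card
          * (∏ i ∈ Finset.univ.filter fun i => y i = 1, c i)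
          * ∑ j ∈ Finset.range (p - (Finset.univ.filter fun i => y i = 1).card + 1),
              (-1:ℝ) ^ j *
                (∑ A ∈ Finset.powersetCard j
                    (Finset.univ \ Finset.univ.filter fun i => y i = 1), ∏ i ∈ A, c i)
                * l ^ j := by
    intro y hy l
    set U : Finset (Fin p) := Finset.univ.filter fun i => y i = 1 with hU
    have hcardc : (Finset.univ \ U).card = p - U.card := by
      rw [Finset.card_sdiff_of_subset (Finset.subset_univ U), Finset.card_univ, Fintype.card_fin]
    calc ∏ i, (l * c i) ^ (y i) * (1 - l * c i) ^ (1 - y i)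
        = ∏ i, (if y i = 1 then l * c i else 1 - l * c i) :=
          Finset.prod_congr rfl fun i _ => pow_ite_aux (hy i)
      _ = (∏ i ∈ U, (l * c i)) *
            ∏ i ∈ Finset.univ.filter fun i => ¬ y i = 1, (1 - l * c i) :=
          Finset.prod_ite _ _
      _ = (∏ i ∈ U, (l * c i)) * ∏ i ∈ Finset.univ \ U, (1 - l * c i) := by
          rw [Finset.filter_not]
      _ = _ := by
          rw [Finset.prod_mul_distrib, Finset.prod_const, prod_one_sub_expand c _ l, hcardc]
  -- pointwise expansion of the joint integrand
  have hpt : ∀ l : ℝ,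
      (∏ i, (l * c i) ^ (x i) * (1 - l * c i) ^ (1 - x i) *
          ((l * c i) ^ (xt i) * (1 - l * c i) ^ (1 - xt i)))
        = ∑ jk ∈ (Finset.range (p - S.card + 1)) ×ˢ (Finset.range (p - T.card + 1)),
            ((-1:ℝ) ^ (jk.1 + jk.2) *
              ((∑ A ∈ Finset.powersetCard jk.1 (Finset.univ \ S), ∏ i ∈ A, c i) *
               (∑ A ∈ Finset.powersetCard jk.2 (Finset.univ \ T), ∏ i ∈ A, c i)) *
              ((∏ i ∈ S, c i) * ∏ i ∈ T, c i)) *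
              l ^ (jk.1 + jk.2 + S.card + T.card) := by
    intro l
    rw [Finset.prod_mul_distrib, key x hx l, key xt hxt l]
    rw [Finset.mul_sum, Finset.mul_sum, Finset.sum_mul_sum, ← Finset.sum_product']
    refine Finset.sum_congr rfl fun jk _ => by ring
  -- nonnegativity of the integrand
  have hnn : 0 ≤ ∫ l in Set.Ioo (0:ℝ) 1,
      ∏ i, (l * c i) ^ (x i) * (1 - l * c i) ^ (1 - x i) *
        ((l * c i) ^ (xt i) * (1 - l * c i) ^ (1 - xt i)) := by
    refine setIntegral_nonneg measurableSet_Ioo fun l hl => ?_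
    refine Finset.prod_nonneg fun i _ => ?_
    have h0 : (0:ℝ) ≤ l * c i := mul_nonneg hl.1.le (hc i).1.le
    have h2 : (0:ℝ) ≤ 1 - l * c i := by nlinarith [(hc i).1, (hc i).2, hl.1, hl.2]
    exact mul_nonneg (mul_nonneg (pow_nonneg h0 _) (pow_nonneg h2 _))
      (mul_nonneg (pow_nonneg h0 _) (pow_nonneg h2 _))
  rw [hjoint x xt hx hxt, ENNReal.toReal_ofReal hnn]
  -- compute the integral
  have hint : (∫ l in Set.Ioo (0:ℝ) 1,
      ∏ i, (l * c i) ^ (x i) * (1 - l * c i) ^ (1 - x i) *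
        ((l * c i) ^ (xt i) * (1 - l * c i) ^ (1 - xt i)))
      = ∑ jk ∈ (Finset.range (p - S.card + 1)) ×ˢ (Finset.range (p - T.card + 1)),
          ((-1:ℝ) ^ (jk.1 + jk.2) *
            ((∑ A ∈ Finset.powersetCard jk.1 (Finset.univ \ S), ∏ i ∈ A, c i) *
             (∑ A ∈ Finset.powersetCard jk.2 (Finset.univ \ T), ∏ i ∈ A, c i)) *
            ((∏ i ∈ S, c i) * ∏ i ∈ T, c i)) *
            (1 / ((jk.1 + jk.2 + S.card + T.card : ℕ) + 1)) := by
    rw [show (fun l => ∏ i, (l * c i) ^ (x i) * (1 - l * c i) ^ (1 - x i) *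
        ((l * c i) ^ (xt i) * (1 - l * c i) ^ (1 - xt i))) = fun l =>
        ∑ jk ∈ (Finset.range (p - S.card + 1)) ×ˢ (Finset.range (p - T.card + 1)),
            ((-1:ℝ) ^ (jk.1 + jk.2) *
              ((∑ A ∈ Finset.powersetCard jk.1 (Finset.univ \ S), ∏ i ∈ A, c i) *
               (∑ A ∈ Finset.powersetCard jk.2 (Finset.univ \ T), ∏ i ∈ A, c i)) *
              ((∏ i ∈ S, c i) * ∏ i ∈ T, c i)) *
              l ^ (jk.1 + jk.2 + S.card + T.card) from funext hpt]
    rw [MeasureTheory.integral_finset_sum _ (fun jk _ =>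
      ((show Continuous fun l : ℝ => _ * l ^ _ from continuous_const.mul (continuous_pow _)).integrableOn_Icc).mono_set
        Set.Ioo_subset_Icc_self)]
    refine Finset.sum_congr rfl fun jk _ => ?_
    rw [MeasureTheory.integral_const_mul, integral_pow_Ioo]
  rw [hint, Finset.sum_product]
  rw [Finset.mul_sum]
  refine Finset.sum_congr rfl fun j _ => ?_
  rw [Finset.mul_sum]
  refine Finset.sum_congr rfl fun k _ => ?_
  push_cast
  ring
end

section
/- In the 3-valued covariate setting with $\lambda \sim \mathrm{Beta}(a,b)$ and $\widetilde{X}$ the conditional independence knockoff, the conditional distribution of $\widetilde{X}$ given $X = x$ is $P(\widetilde{X} = \widetilde{x} \mid X = x) = \frac{\Gamma(a+2p-m_2-n_2)\,\Gamma(b+m_2+n_2)\,\Gamma(a+b+p)}{\Gamma(a+b+2p)\,\Gamma(a+p-m_2)\,\Gamma(b+m_2)} \prod_{i \in T_1} c_i \prod_{i\in T_0}(1-c_i)$, where $m_2, n_2$ are the numbers of coordinates equal to 2 in $x$ and $\widetilde{x}$ respectively, and $T_0, T_1$ are the index sets where $\widetilde{x}_i = 0, 1$. -/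
open MeasureTheory ProbabilityTheory Real
open scoped ENNReal NNReal

lemma realBeta (A B : ℝ) (hA : 0 < A) (hB : 0 < B) :
    ∫ l in Set.Ioo (0:ℝ) 1, l ^ (A - 1) * (1 - l) ^ (B - 1)
      = Real.Gamma A * Real.Gamma B / Real.Gamma (A + B) := by
  have h1 : ∫ l in Set.Ioo (0:ℝ) 1, l ^ (A-1) * (1-l) ^ (B-1)
      = ∫ l in (0:ℝ)..1, l ^ (A-1) * (1-l)^(B-1) := by
    rw [intervalIntegral.integral_of_le zero_le_one,
      MeasureTheory.integral_Ioc_eq_integral_Ioo]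
  have hc : Complex.betaIntegral A B
      = ((∫ l in (0:ℝ)..1, l ^ (A-1) * (1-l)^(B-1) : ℝ) : ℂ) := by
    rw [Complex.betaIntegral, ← intervalIntegral.integral_ofReal]
    apply intervalIntegral.integral_congr
    intro x hx
    rw [Set.uIcc_of_le zero_le_one] at hx
    simp only []
    rw [Complex.ofReal_mul, Complex.ofReal_cpow hx.1,
      Complex.ofReal_cpow (by linarith [hx.2] : (0:ℝ) ≤ 1 - x)]
    push_cast
    ring
  have h2 := Complex.Gamma_mul_Gamma_eq_betaIntegral
    (s := (A:ℂ)) (t := (B:ℂ)) (by simpa using hA) (by simpa using hB)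
  rw [hc, ← Complex.ofReal_add, Complex.Gamma_ofReal, Complex.Gamma_ofReal,
    Complex.Gamma_ofReal, ← Complex.ofReal_mul, ← Complex.ofReal_mul] at h2
  have h3 := Complex.ofReal_injective h2
  have hG : Real.Gamma (A + B) ≠ 0 := (Real.Gamma_pos_of_pos (by linarith)).ne'
  rw [h1]
  field_simp
  linarith [h3]

lemma evalCore (a b C : ℝ) (ha : 0 < a) (hb : 0 < b) (k j : ℕ) :
    ∫ l in Set.Ioo (0:ℝ) 1,
      (Real.Gamma (a + b) / (Real.Gamma a * Real.Gamma b)) *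
        l ^ (a - 1) * (1 - l) ^ (b - 1) * (l ^ k * (1 - l) ^ j * C)
    = (Real.Gamma (a + b) / (Real.Gamma a * Real.Gamma b)) * C *
      (Real.Gamma (a + k) * Real.Gamma (b + j) / Real.Gamma (a + b + k + j)) := by
  set K := Real.Gamma (a + b) / (Real.Gamma a * Real.Gamma b) with hK
  have hcongr : ∀ l ∈ Set.Ioo (0:ℝ) 1,
      K * l ^ (a - 1) * (1 - l) ^ (b - 1) * (l ^ k * (1 - l) ^ j * C)
      = (K * C) * (l ^ (a + k - 1) * (1 - l) ^ (b + j - 1)) := by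
    intro l hl
    have hl0 : (0:ℝ) < l := hl.1
    have hl1 : (0:ℝ) < 1 - l := by linarith [hl.2]
    have e1 : (l:ℝ) ^ (k:ℕ) = l ^ ((k:ℝ)) := (Real.rpow_natCast l k).symm
    have e2 : ((1-l):ℝ) ^ (j:ℕ) = (1-l) ^ ((j:ℝ)) := (Real.rpow_natCast (1-l) j).symm
    rw [e1, e2]
    rw [show a + k - 1 = (a - 1) + k by ring, show b + j - 1 = (b - 1) + j by ring,
      Real.rpow_add hl0, Real.rpow_add hl1]
    ring
  rw [MeasureTheory.setIntegral_congr_fun measurableSet_Ioo hcongr,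
    MeasureTheory.integral_const_mul,
    realBeta (a + k) (b + j) (by positivity) (by positivity)]
  rw [show a + (k:ℝ) + (b + (j:ℝ)) = a + b + k + j by ring]

lemma prodEq (p : ℕ) (c : Fin p → ℝ) (y : Fin p → ℕ) (hy : ∀ i, y i ≤ 2) (l : ℝ) :
    ∏ i, (if y i = 0 then l * (1 - c i) else if y i = 1 then l * c i else 1 - l)
      = l ^ ((Finset.univ.filter fun i => y i = 0).card
            + (Finset.univ.filter fun i => y i = 1).card)
        * (1 - l) ^ (Finset.univ.filter fun i => y i = 2).card
        * (∏ i ∈ Finset.univ.filter fun i => y i = 1, c i)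
        * ∏ i ∈ Finset.univ.filter fun i => y i = 0, (1 - c i) := by
  rw [← Finset.prod_filter_mul_prod_filter_not Finset.univ (fun i => y i = 0)]
  rw [← Finset.prod_filter_mul_prod_filter_not
    (Finset.univ.filter fun i => ¬ y i = 0) (fun i => y i = 1)]
  have e1 : (Finset.univ.filter fun i => ¬ y i = 0).filter (fun i => y i = 1)
      = Finset.univ.filter fun i => y i = 1 := by
    rw [Finset.filter_filter]
    apply Finset.filter_congr
    intro i _
    constructor
    · exact fun h => h.2
    · intro h; omega
  have e2 : (Finset.univ.filter fun i => ¬ y i = 0).filter (fun i => ¬ y i = 1)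
      = Finset.univ.filter fun i => y i = 2 := by
    rw [Finset.filter_filter]
    apply Finset.filter_congr
    intro i _
    have := hy i
    constructor
    · intro h; omega
    · intro h; omega
  rw [e1, e2]
  have p0 : ∏ i ∈ Finset.univ.filter fun i => y i = 0,
      (if y i = 0 then l * (1 - c i) else if y i = 1 then l * c i else 1 - l)
      = ∏ i ∈ Finset.univ.filter fun i => y i = 0, (l * (1 - c i)) := by
    apply Finset.prod_congr rfl
    intro i hi
    simp only [Finset.mem_filter] at hi
    simp [hi.2]
  have p1 : ∏ i ∈ Finset.univ.filter fun i => y i = 1,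
      (if y i = 0 then l * (1 - c i) else if y i = 1 then l * c i else 1 - l)
      = ∏ i ∈ Finset.univ.filter fun i => y i = 1, (l * c i) := by
    apply Finset.prod_congr rfl
    intro i hi
    simp only [Finset.mem_filter] at hi
    have : ¬ y i = 0 := by omega
    simp [hi.2, this]
  have p2 : ∏ i ∈ Finset.univ.filter fun i => y i = 2,
      (if y i = 0 then l * (1 - c i) else if y i = 1 then l * c i else 1 - l)
      = ∏ i ∈ Finset.univ.filter fun i => y i = 2, (1 - l) := by
    apply Finset.prod_congr rfl
    intro i hi
    simp only [Finset.mem_filter] at hi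
    have h0 : ¬ y i = 0 := by omega
    have h1 : ¬ y i = 1 := by omega
    simp [h0, h1]
  rw [p0, p1, p2, Finset.prod_mul_distrib, Finset.prod_mul_distrib,
    Finset.prod_const, Finset.prod_const, Finset.prod_const, pow_add]
  ring

lemma cardEq (p : ℕ) (y : Fin p → ℕ) (hy : ∀ i, y i ≤ 2) :
    (Finset.univ.filter fun i => y i = 0).card
      + (Finset.univ.filter fun i => y i = 1).card
      + (Finset.univ.filter fun i => y i = 2).card = p := by
  have h1 := Finset.card_filter_add_card_filter_not
    (s := (Finset.univ : Finset (Fin p))) (p := fun i => y i = 2)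
  have h2 : (Finset.univ.filter fun i => ¬ y i = 2)
      = (Finset.univ.filter fun i => y i = 0) ∪ (Finset.univ.filter fun i => y i = 1) := by
    ext i
    simp only [Finset.mem_filter, Finset.mem_union, Finset.mem_univ, true_and]
    have := hy i; omega
  have h3 : Disjoint (Finset.univ.filter fun i => y i = 0)
      (Finset.univ.filter fun i => y i = 1) := by
    rw [Finset.disjoint_filter]
    intro i _ h; omega
  rw [h2, Finset.card_union_of_disjoint h3, Finset.card_univ, Fintype.card_fin] at h1
  omega

set_option maxHeartbeats 1600000 in
/-- Three-valued covariates with conditional independence knockoff: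
`X₁,…,X_p, X̃₁,…,X̃_p` conditionally independent given `λ ∼ Beta(a,b)` with
`P(Xᵢ=0∣λ) = λ(1-cᵢ)`, `P(Xᵢ=1∣λ) = λcᵢ`, `P(Xᵢ=2∣λ) = 1-λ` and identically for `X̃ᵢ`.
Then `P(X̃ = x̃ ∣ X = x)
  = Γ(a+2p-m₂-n₂)Γ(b+m₂+n₂)Γ(a+b+p) / (Γ(a+b+2p)Γ(a+p-m₂)Γ(b+m₂))
    · ∏_{i∈T₁} cᵢ ∏_{i∈T₀} (1-cᵢ)`. -/
theorem stmt14 {Ω : Type} [MeasurableSpace Ω] (μ : Measure Ω) [IsProbabilityMeasure μ]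
    (p : ℕ) (a b : ℝ) (ha : 0 < a) (hb : 0 < b)
    (c : Fin p → ℝ) (hc : ∀ i, c i ∈ Set.Ioo (0:ℝ) 1)
    (X Xt : Fin p → Ω → ℕ) (hX : ∀ i, Measurable (X i)) (hXt : ∀ i, Measurable (Xt i))
    (hmarg : ∀ y : Fin p → ℕ, (∀ i, y i ≤ 2) →
      μ {ω | ∀ i, X i ω = y i}
        = ENNReal.ofReal (∫ l in Set.Ioo (0:ℝ) 1,
            (Real.Gamma (a + b) / (Real.Gamma a * Real.Gamma b)) *
              l ^ (a - 1) * (1 - l) ^ (b - 1) *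
              ∏ i, (if y i = 0 then l * (1 - c i)
                    else if y i = 1 then l * c i else 1 - l)))
    (hjoint : ∀ y yt : Fin p → ℕ, (∀ i, y i ≤ 2) → (∀ i, yt i ≤ 2) →
      μ {ω | (∀ i, X i ω = y i) ∧ ∀ i, Xt i ω = yt i}
        = ENNReal.ofReal (∫ l in Set.Ioo (0:ℝ) 1,
            (Real.Gamma (a + b) / (Real.Gamma a * Real.Gamma b)) *
              l ^ (a - 1) * (1 - l) ^ (b - 1) *
              ∏ i, ((if y i = 0 then l * (1 - c i)
                     else if y i = 1 then l * c i else 1 - l) *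
                    (if yt i = 0 then l * (1 - c i)
                     else if yt i = 1 then l * c i else 1 - l))))
    (x xt : Fin p → ℕ) (hx : ∀ i, x i ≤ 2) (hxt : ∀ i, xt i ≤ 2)
    (hpos : μ {ω | ∀ i, X i ω = x i} ≠ 0) :
    (μ {ω | (∀ i, X i ω = x i) ∧ ∀ i, Xt i ω = xt i}).toReal
        / (μ {ω | ∀ i, X i ω = x i}).toReal
      = (Real.Gamma (a + 2 * p - (Finset.univ.filter fun i => x i = 2).card
              - (Finset.univ.filter fun i => xt i = 2).card) *
          Real.Gamma (b + (Finset.univ.filter fun i => x i = 2).card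
              + (Finset.univ.filter fun i => xt i = 2).card) *
          Real.Gamma (a + b + p)) /
        (Real.Gamma (a + b + 2 * p) *
          Real.Gamma (a + p - (Finset.univ.filter fun i => x i = 2).card) *
          Real.Gamma (b + (Finset.univ.filter fun i => x i = 2).card)) *
        (∏ i ∈ Finset.univ.filter fun i => xt i = 1, c i) *
        ∏ i ∈ Finset.univ.filter fun i => xt i = 0, (1 - c i) := by
  classical
  set K := Real.Gamma (a + b) / (Real.Gamma a * Real.Gamma b) with hKdef
  set m := (Finset.univ.filter fun i => x i = 2).card with hmdef
  set n := (Finset.univ.filter fun i => xt i = 2).card with hndef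
  set kx := (Finset.univ.filter fun i => x i = 0).card
    + (Finset.univ.filter fun i => x i = 1).card with hkxdef
  set kt := (Finset.univ.filter fun i => xt i = 0).card
    + (Finset.univ.filter fun i => xt i = 1).card with hktdef
  set D1 := ∏ i ∈ Finset.univ.filter fun i => x i = 1, c i with hD1def
  set D0 := ∏ i ∈ Finset.univ.filter fun i => x i = 0, (1 - c i) with hD0def
  set C1 := ∏ i ∈ Finset.univ.filter fun i => xt i = 1, c i with hC1def
  set C0 := ∏ i ∈ Finset.univ.filter fun i => xt i = 0, (1 - c i) with hC0def
  have hkx0 : (0:ℝ) ≤ (kx:ℝ) := Nat.cast_nonneg _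
  have hkt0 : (0:ℝ) ≤ (kt:ℝ) := Nat.cast_nonneg _
  have hm0 : (0:ℝ) ≤ (m:ℝ) := Nat.cast_nonneg _
  have hn0 : (0:ℝ) ≤ (n:ℝ) := Nat.cast_nonneg _
  have hcx : kx + m = p := by
    have := cardEq p x hx; omega
  have hct : kt + n = p := by
    have := cardEq p xt hxt; omega
  have hKpos : 0 < K :=
    div_pos (Real.Gamma_pos_of_pos (by linarith))
      (mul_pos (Real.Gamma_pos_of_pos ha) (Real.Gamma_pos_of_pos hb))
  have hD1pos : 0 < D1 := Finset.prod_pos fun i _ => (hc i).1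
  have hD0pos : 0 < D0 := Finset.prod_pos fun i _ => by linarith [(hc i).2]
  have hC1pos : 0 < C1 := Finset.prod_pos fun i _ => (hc i).1
  have hC0pos : 0 < C0 := Finset.prod_pos fun i _ => by linarith [(hc i).2]
  -- marginal
  have hm : μ {ω | ∀ i, X i ω = x i}
      = ENNReal.ofReal (K * (D1 * D0) *
        (Real.Gamma (a + kx) * Real.Gamma (b + m) / Real.Gamma (a + b + kx + m))) := by
    rw [hmarg x hx]
    congr 1
    rw [MeasureTheory.setIntegral_congr_fun (measurableSet_Ioo)
      (g := fun l : ℝ => K * l ^ (a - 1) * (1 - l) ^ (b - 1) *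
        (l ^ kx * (1 - l) ^ m * (D1 * D0)))
      (fun l _ => by
        simp only []
        rw [prodEq p c x hx l]
        ring)]
    exact evalCore a b (D1 * D0) ha hb kx m
  -- joint
  have hj : μ {ω | (∀ i, X i ω = x i) ∧ ∀ i, Xt i ω = xt i}
      = ENNReal.ofReal (K * (D1 * D0 * (C1 * C0)) *
        (Real.Gamma (a + ((kx + kt : ℕ) : ℝ)) * Real.Gamma (b + ((m + n : ℕ) : ℝ))
          / Real.Gamma (a + b + ((kx + kt : ℕ) : ℝ) + ((m + n : ℕ) : ℝ)))) := by
    rw [hjoint x xt hx hxt]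
    congr 1
    rw [MeasureTheory.setIntegral_congr_fun (measurableSet_Ioo)
      (g := fun l : ℝ => K * l ^ (a - 1) * (1 - l) ^ (b - 1) *
        (l ^ (kx + kt) * (1 - l) ^ (m + n) * (D1 * D0 * (C1 * C0))))
      (fun l _ => by
        simp only []
        rw [Finset.prod_mul_distrib, prodEq p c x hx l, prodEq p c xt hxt l]
        ring)]
    exact evalCore a b (D1 * D0 * (C1 * C0)) ha hb (kx + kt) (m + n)
  have hGm : 0 < Real.Gamma (a + kx) * Real.Gamma (b + m) / Real.Gamma (a + b + kx + m) :=
    div_pos (mul_pos (Real.Gamma_pos_of_pos (by linarith))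
      (Real.Gamma_pos_of_pos (by linarith))) (Real.Gamma_pos_of_pos (by linarith))
  have hGj : 0 < Real.Gamma (a + ((kx + kt : ℕ) : ℝ)) * Real.Gamma (b + ((m + n : ℕ) : ℝ))
      / Real.Gamma (a + b + ((kx + kt : ℕ) : ℝ) + ((m + n : ℕ) : ℝ)) := by
    have h1 : (0:ℝ) ≤ ((kx + kt : ℕ) : ℝ) := Nat.cast_nonneg _
    have h2 : (0:ℝ) ≤ ((m + n : ℕ) : ℝ) := Nat.cast_nonneg _
    exact div_pos (mul_pos (Real.Gamma_pos_of_pos (by linarith))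
      (Real.Gamma_pos_of_pos (by linarith))) (Real.Gamma_pos_of_pos (by linarith))
  rw [hm, hj,
    ENNReal.toReal_ofReal
      (mul_pos (mul_pos hKpos (mul_pos (mul_pos hD1pos hD0pos) (mul_pos hC1pos hC0pos))) hGj).le,
    ENNReal.toReal_ofReal (mul_pos (mul_pos hKpos (mul_pos hD1pos hD0pos)) hGm).le]
  -- cast identities
  have ekx : (kx : ℝ) = (p : ℝ) - m := by
    have : (kx : ℝ) + m = p := by exact_mod_cast congrArg (Nat.cast : ℕ → ℝ) hcx
    linarith
  have ekt : (kt : ℝ) = (p : ℝ) - n := by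
    have : (kt : ℝ) + n = p := by exact_mod_cast congrArg (Nat.cast : ℕ → ℝ) hct
    linarith
  have hmp : (m : ℝ) ≤ p := by
    have : m ≤ p := by omega
    exact_mod_cast this
  have hnp : (n : ℝ) ≤ p := by
    have : n ≤ p := by omega
    exact_mod_cast this
  have e1 : a + ((kx + kt : ℕ) : ℝ) = a + 2 * p - m - n := by push_cast; linarith
  have e2 : b + ((m + n : ℕ) : ℝ) = b + m + n := by push_cast; ring
  have e3 : a + b + ((kx + kt : ℕ) : ℝ) + ((m + n : ℕ) : ℝ) = a + b + 2 * p := by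
    push_cast; linarith
  have e4 : a + (kx : ℝ) = a + p - m := by linarith
  have e5 : a + b + (kx : ℝ) + (m : ℝ) = a + b + p := by linarith
  rw [e1, e2, e3, e4, e5]
  have g1 : Real.Gamma (a + b + 2 * p) ≠ 0 :=
    (Real.Gamma_pos_of_pos (by linarith)).ne'
  have g2 : Real.Gamma (a + p - m) ≠ 0 :=
    (Real.Gamma_pos_of_pos (by linarith)).ne'
  have g3 : Real.Gamma (b + m) ≠ 0 :=
    (Real.Gamma_pos_of_pos (by linarith)).ne'
  have g4 : Real.Gamma (a + b + p) ≠ 0 :=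
    (Real.Gamma_pos_of_pos (by linarith)).ne'
  have g5 : Real.Gamma (a + 2 * p - m - n) ≠ 0 :=
    (Real.Gamma_pos_of_pos (by linarith)).ne'
  have g6 : Real.Gamma (b + m + n) ≠ 0 :=
    (Real.Gamma_pos_of_pos (by linarith)).ne'
  have hK0 : K ≠ 0 := hKpos.ne'
  have hD10 : D1 ≠ 0 := hD1pos.ne'
  have hD00 : D0 ≠ 0 := hD0pos.ne'
  field_simp
end

section
/- Suppose the joint law of $(X, \widetilde{X}) \in \mathbb{R}^{2p}$ admits the representation $P(X \in A, \widetilde{X} \in B_1 \times \cdots \times B_p) = \int_\Theta \prod_{i=1}^p P_i(A_i\mid\theta) P_i(B_i\mid\theta)\,\gamma(d\theta)$ for all Borel rectangles. Then for each $i \in \{1,\ldots,p\}$, swapping $X_i$ with $\widetilde{X}_i$ leaves the joint distribution invariant: $f_i(X, \widetilde{X}) \sim (X, \widetilde{X})$, i.e. $\widetilde{X}$ satisfies the knockoff exchangeability property. -/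
open MeasureTheory ProbabilityTheory
open scoped ENNReal NNReal

/-- If the joint law of `(X, X̃)` admits the conditional-independence mixture
representation `P(X ∈ A₁×⋯×A_p, X̃ ∈ B₁×⋯×B_p) = ∫_Θ ∏ᵢ Pᵢ(Aᵢ∣θ) Pᵢ(Bᵢ∣θ) γ(dθ)`,
then for each `i`, swapping `Xᵢ` with `X̃ᵢ` leaves the joint distribution invariant:
`fᵢ(X, X̃) ∼ (X, X̃)`, i.e. `X̃` satisfies the knockoff exchangeability property. -/
theorem stmt18 {Ω Θ : Type} [MeasurableSpace Ω] [MeasurableSpace Θ]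
    (μ : Measure Ω) [IsProbabilityMeasure μ]
    (γ : Measure Θ) [IsProbabilityMeasure γ]
    (p : ℕ) (κ : Fin p → Kernel Θ ℝ) (hκ : ∀ i, IsMarkovKernel (κ i))
    (X Xt : Ω → Fin p → ℝ) (hX : Measurable X) (hXt : Measurable Xt)
    (hrep : ∀ A B : Fin p → Set ℝ, (∀ i, MeasurableSet (A i)) → (∀ i, MeasurableSet (B i)) →
      μ {ω | X ω ∈ Set.univ.pi A ∧ Xt ω ∈ Set.univ.pi B}
        = ∫⁻ θ, ∏ i, κ i θ (A i) * κ i θ (B i) ∂γ)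
    (i : Fin p) :
    μ.map (fun ω => ((Function.update (X ω) i (Xt ω i),
        Function.update (Xt ω) i (X ω i)) : (Fin p → ℝ) × (Fin p → ℝ)))
      = μ.map (fun ω => ((X ω, Xt ω) : (Fin p → ℝ) × (Fin p → ℝ))) := by
  classical
  -- measurability of the swapped map
  have hupd1 : Measurable fun ω => Function.update (X ω) i (Xt ω i) := by
    apply measurable_pi_lambda
    intro j
    by_cases h : j = i
    · subst h; simpa [Function.comp_def] using (measurable_pi_apply j).comp hXt
    · simp only [Function.update_apply, if_neg h]
      exact hX.eval
  have hupd2 : Measurable fun ω => Function.update (Xt ω) i (X ω i) := by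
    apply measurable_pi_lambda
    intro j
    by_cases h : j = i
    · subst h; simpa [Function.comp_def] using (measurable_pi_apply j).comp hX
    · simp only [Function.update_apply, if_neg h]
      exact hXt.eval
  have hf : Measurable fun ω => ((Function.update (X ω) i (Xt ω i),
      Function.update (Xt ω) i (X ω i)) : (Fin p → ℝ) × (Fin p → ℝ)) := hupd1.prodMk hupd2
  have hg : Measurable fun ω => ((X ω, Xt ω) : (Fin p → ℝ) × (Fin p → ℝ)) := hX.prodMk hXt
  -- the generating π-system: boxes in each coordinate
  set C : Set (Set (Fin p → ℝ)) :=
    Set.pi Set.univ '' Set.pi Set.univ (fun _ : Fin p => { s : Set ℝ | MeasurableSet s }) with hC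
  have hCspan : IsCountablySpanning C := by
    exact ⟨fun _ => Set.univ, fun _ => ⟨fun _ => Set.univ, fun j _ => by simp, by simp⟩,
      Set.iUnion_const _⟩
  have hgen : MeasurableSpace.generateFrom (Set.image2 (· ×ˢ ·) C C)
      = (inferInstance : MeasurableSpace ((Fin p → ℝ) × (Fin p → ℝ))) := by
    refine generateFrom_eq_prod ?_ ?_ hCspan hCspan <;>
      exact generateFrom_pi
  have hpi : IsPiSystem (Set.image2 (· ×ˢ ·) C C) :=
    IsPiSystem.prod isPiSystem_pi isPiSystem_pi
  have h1 : IsProbabilityMeasure (μ.map (fun ω => ((Function.update (X ω) i (Xt ω i),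
      Function.update (Xt ω) i (X ω i)) : (Fin p → ℝ) × (Fin p → ℝ)))) :=
    Measure.isProbabilityMeasure_map hf.aemeasurable
  have h2 : IsProbabilityMeasure (μ.map (fun ω => ((X ω, Xt ω) : (Fin p → ℝ) × (Fin p → ℝ)))) :=
    Measure.isProbabilityMeasure_map hg.aemeasurable
  refine MeasureTheory.ext_of_generate_finite _ hgen.symm hpi ?_ (by simp)
  rintro _ ⟨_, ⟨A, hA, rfl⟩, _, ⟨B, hB, rfl⟩, rfl⟩
  have hA' : ∀ j, MeasurableSet (A j) := fun j => hA j (Set.mem_univ j)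
  have hB' : ∀ j, MeasurableSet (B j) := fun j => hB j (Set.mem_univ j)
  have hsA : MeasurableSet (Set.univ.pi A) := MeasurableSet.univ_pi hA'
  have hsB : MeasurableSet (Set.univ.pi B) := MeasurableSet.univ_pi hB'
  rw [Measure.map_apply hf (hsA.prod hsB), Measure.map_apply hg (hsA.prod hsB)]
  have hpre1 : (fun ω => ((Function.update (X ω) i (Xt ω i),
        Function.update (Xt ω) i (X ω i)) : (Fin p → ℝ) × (Fin p → ℝ))) ⁻¹'
        (Set.univ.pi A ×ˢ Set.univ.pi B)
      = {ω | X ω ∈ Set.univ.pi (Function.update A i (B i))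
          ∧ Xt ω ∈ Set.univ.pi (Function.update B i (A i))} := by
    ext ω
    simp only [Set.mem_preimage, Set.mem_prod, Set.mem_pi, Set.mem_univ, forall_true_left,
      Set.mem_setOf_eq, Function.update_apply]
    constructor
    · rintro ⟨h1, h2⟩
      constructor <;> intro j <;> by_cases h : j = i
      · subst h; simpa using h2 j
      · simpa [h] using h1 j
      · subst h; simpa using h1 j
      · simpa [h] using h2 j
    · rintro ⟨h1, h2⟩
      constructor <;> intro j <;> by_cases h : j = i
      · subst h; simpa using h2 j
      · simpa [h] using h1 j
      · subst h; simpa using h1 j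
      · simpa [h] using h2 j
  have hpre2 : (fun ω => ((X ω, Xt ω) : (Fin p → ℝ) × (Fin p → ℝ))) ⁻¹'
        (Set.univ.pi A ×ˢ Set.univ.pi B)
      = {ω | X ω ∈ Set.univ.pi A ∧ Xt ω ∈ Set.univ.pi B} := by
    ext ω; simp [Set.mem_prod]
  rw [hpre1, hpre2,
    hrep (Function.update A i (B i)) (Function.update B i (A i))
      (fun j => by by_cases h : j = i <;> simp [Function.update_apply, h, hA', hB'])
      (fun j => by by_cases h : j = i <;> simp [Function.update_apply, h, hA', hB']),
    hrep A B hA' hB']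
  refine lintegral_congr fun θ => ?_
  refine Finset.prod_congr rfl fun j _ => ?_
  by_cases h : j = i
  · subst h; simp [mul_comm]
  · simp [Function.update_apply, h]
end

section
/- If $(X, \widetilde{X})$ is a conditional independence knockoff pair, i.e. its law has the mixture representation $\int_\Theta \prod_{i=1}^p P_i(A_i\mid\theta)P_i(B_i\mid\theta)\gamma(d\theta)$, then there exists an infinite sequence $V = (V_1, V_2, \ldots)$ of real random variables with $(V_1,\ldots,V_{2p}) \sim (X,\widetilde{X})$ such that for all $1 \le i \le p$ and $j, k \ge 0$, swapping $V_{kp+i}$ with $V_{jp+i}$ leaves the law of the entire sequence unchanged (partial exchangeability within each residue class mod $p$). -/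
open MeasureTheory ProbabilityTheory
open scoped ENNReal NNReal

section Stmt19AuxSection
open Set Filter
open scoped Topology

noncomputable section
namespace Stmt19Aux

instance fact01 : Fact ((0:ℝ) < 1) := ⟨one_pos⟩

abbrev S1 := AddCircle (1:ℝ)

instance : IsProbabilityMeasure (volume : Measure S1) :=
  ⟨by rw [AddCircle.measure_univ]; simp⟩

instance : NullSingletonClass (volume : Measure S1) := by
  constructor
  intro x
  have h := AddCircle.volume_closedBall (T := 1) (x := x) 0
  have h2 : volume {x} ≤ volume (Metric.closedBall x 0) :=
    measure_mono (fun y hy => by simp_all [Metric.mem_closedBall])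
  refine le_zero_iff.mp (h2.trans (le_of_eq ?_))
  rw [h]; norm_num

abbrev Gn := ℕ → S1

def muG : Measure Gn := Measure.addHaarMeasure ⊤

instance : Measure.IsAddHaarMeasure muG := by
  unfold muG; infer_instance

instance : IsProbabilityMeasure muG :=
  ⟨by unfold muG; simpa using Measure.addHaarMeasure_self (G := Gn) (K₀ := ⊤)⟩

/-- Permutation invariance of `muG`. -/
lemma muG_comp_perm (σ : Equiv.Perm ℕ) :
    Measure.map (fun ω : Gn => ω ∘ σ) muG = muG := by
  have hmeas : Measurable (fun ω : Gn => ω ∘ σ) :=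
    measurable_pi_lambda _ (fun n => measurable_pi_apply _)
  set ν : Measure Gn := Measure.map (fun ω : Gn => ω ∘ σ) muG with hν
  haveI : IsProbabilityMeasure ν := Measure.isProbabilityMeasure_map hmeas.aemeasurable
  haveI : ν.IsAddLeftInvariant := by
    constructor
    intro g
    rw [hν, Measure.map_map (measurable_const_add g) hmeas]
    have : ((g + ·) ∘ fun ω : Gn => ω ∘ σ) = (fun ω : Gn => ω ∘ σ) ∘ ((g ∘ σ.symm) + ·) := by
      funext ω; funext n
      simp [Function.comp]
    rw [this, ← Measure.map_map hmeas (measurable_const_add _),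
      map_add_left_eq_self muG (g ∘ ⇑σ.symm)]
  have h := Measure.isAddInvariant_eq_smul_of_compactSpace ν muG
  have huniv := congrArg (fun m : Measure Gn => m univ) h
  simp only [measure_univ, Measure.smul_apply, ENNReal.smul_def, smul_eq_mul, mul_one] at huniv
  have hc : ν.addHaarScalarFactor muG = 1 := by
    have := huniv.symm
    rwa [ENNReal.coe_eq_one] at this
  rw [h, hc, one_smul]

/-- Finite marginals of `muG` are iid uniform. -/
lemma muG_marginal (N : ℕ) :
    Measure.map (fun ω : Gn => fun i : Fin N => ω i) muG
      = Measure.pi (fun _ : Fin N => (volume : Measure S1)) := by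
  have hmeas : Measurable (fun ω : Gn => fun i : Fin N => ω (i : ℕ)) :=
    measurable_pi_lambda _ (fun i => measurable_pi_apply _)
  set ν : Measure (Fin N → S1) := Measure.map (fun ω : Gn => fun i : Fin N => ω (i : ℕ)) muG
    with hν
  haveI : IsProbabilityMeasure ν := Measure.isProbabilityMeasure_map hmeas.aemeasurable
  haveI : ν.IsAddLeftInvariant := by
    constructor
    intro g
    rw [hν, Measure.map_map (measurable_const_add g) hmeas]
    have : ((g + ·) ∘ fun ω : Gn => fun i : Fin N => ω (i : ℕ))
        = (fun ω : Gn => fun i : Fin N => ω (i : ℕ))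
          ∘ ((fun n => if h : n < N then g ⟨n, h⟩ else 0) + ·) := by
      funext ω; funext i
      simp [Function.comp, i.isLt]
    rw [this, ← Measure.map_map hmeas (measurable_const_add _),
      map_add_left_eq_self muG _]
  have h := Measure.isAddInvariant_eq_smul_of_compactSpace ν
    (Measure.pi (fun _ : Fin N => (volume : Measure S1)))
  have huniv := congrArg (fun m : Measure (Fin N → S1) => m univ) h
  simp only [measure_univ, Measure.smul_apply, ENNReal.smul_def, smul_eq_mul, mul_one] at huniv
  have hc : ν.addHaarScalarFactor (Measure.pi (fun _ : Fin N => (volume : Measure S1))) = 1 := by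
    have := huniv.symm
    rwa [ENNReal.coe_eq_one] at this
  rw [h, hc, one_smul]





/-- The representative in `[0,1)` of a point on the circle. -/
def c2r (v : S1) : ℝ := ((AddCircle.equivIco 1 0 v : Ico (0:ℝ) (0+1)) : ℝ)

lemma measurable_c2r : Measurable c2r :=
  measurable_subtype_coe.comp (AddCircle.measurableEquivIco 1 0).measurable

lemma c2r_mem (v : S1) : c2r v ∈ Ico (0:ℝ) 1 := by
  have h : c2r v ∈ Ico (0:ℝ) (0+1) := (AddCircle.equivIco 1 0 v).2
  exact ⟨h.1, by linarith [h.2]⟩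

lemma c2r_mk (x : ℝ) (hx : x ∈ Ico (0:ℝ) 1) : c2r ((x : ℝ) : S1) = x := by
  have h : c2r ((x : ℝ) : S1) = Int.fract (x / 1) * 1 := AddCircle.coe_equivIco_mk_apply 1 x
  rw [h, div_one, mul_one, Int.fract_eq_self]
  exact ⟨hx.1, hx.2⟩

lemma c2r_eq_zero_iff (v : S1) : c2r v = 0 ↔ v = ((0:ℝ) : S1) := by
  constructor
  · intro h
    have h2 : ((AddCircle.equivIco 1 0).symm (AddCircle.equivIco 1 0 v) : S1) = v :=
      (AddCircle.equivIco 1 0).symm_apply_apply v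
    have h3 : ((AddCircle.equivIco 1 0 v : Ico (0:ℝ) (0+1)) : ℝ) = 0 := h
    rw [← h2]
    show (((AddCircle.equivIco 1 0 v : Ico (0:ℝ) (0+1)) : ℝ) : S1) = _
    rw [h3]
  · intro h
    rw [h]
    exact c2r_mk 0 ⟨le_refl _, one_pos⟩

/-- The law of `c2r` is uniform on `(0,1)` (up to the null endpoint). -/
lemma map_c2r : Measure.map c2r (volume : Measure S1) = volume.restrict (Ioo (0:ℝ) 1) := by
  ext s hs
  rw [Measure.map_apply measurable_c2r hs, Measure.restrict_apply hs]
  rw [AddCircle.add_projection_respects_measure 1 0 (measurable_c2r hs)]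
  have hIoo : ((QuotientAddGroup.mk ⁻¹' (c2r ⁻¹' s)) ∩ Ioc 0 (0+1)) ∩ Ioo (0:ℝ) 1
      = (s ∩ Ioo 0 1) := by
    ext x
    simp only [mem_inter_iff, mem_preimage, mem_Ioc, mem_Ioo, zero_add]
    constructor
    · rintro ⟨⟨hmem, -⟩, hx⟩
      rw [c2r_mk x ⟨hx.1.le, hx.2⟩] at hmem
      exact ⟨hmem, hx⟩
    · rintro ⟨hmem, hx⟩
      refine ⟨⟨?_, hx.1, hx.2.le⟩, hx⟩
      rw [c2r_mk x ⟨hx.1.le, hx.2⟩]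
      exact hmem
  have hsub1 : ((QuotientAddGroup.mk ⁻¹' (c2r ⁻¹' s)) ∩ Ioc 0 (0+1)) \ (s ∩ Ioo 0 1) ⊆ {1} := by
    intro x hx
    rcases hx with ⟨hx1, hx2⟩
    by_contra hne
    have hxIoo : x ∈ Ioo (0:ℝ) 1 := by
      rcases hx1.2 with ⟨h1, h2⟩
      rw [zero_add] at h2
      exact ⟨h1, lt_of_le_of_ne h2 (by simpa using hne)⟩
    exact hx2 (hIoo ▸ (mem_inter hx1 hxIoo) : x ∈ s ∩ Ioo 0 1)
  have hsub2 : (s ∩ Ioo 0 1) ⊆ ((QuotientAddGroup.mk ⁻¹' (c2r ⁻¹' s)) ∩ Ioc 0 (0+1)) := by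
    intro x hx
    have : x ∈ ((QuotientAddGroup.mk ⁻¹' (c2r ⁻¹' s)) ∩ Ioc 0 (0+1)) ∩ Ioo (0:ℝ) 1 := by
      rw [hIoo]; exact hx
    exact this.1
  apply le_antisymm
  · calc volume ((QuotientAddGroup.mk ⁻¹' (c2r ⁻¹' s)) ∩ Ioc 0 (0+1))
        ≤ volume ((s ∩ Ioo 0 1) ∪ {1}) := by
          apply measure_mono
          intro x hx
          by_cases hmem : x ∈ s ∩ Ioo 0 1
          · exact Or.inl hmem
          · exact Or.inr (hsub1 ⟨hx, hmem⟩)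
      _ ≤ volume (s ∩ Ioo 0 1) + volume ({1} : Set ℝ) := measure_union_le _ _
      _ = volume (s ∩ Ioo 0 1) := by simp
  · exact measure_mono hsub2

variable {Θ : Type} [MeasurableSpace Θ]

/-- The CDF of the kernel. -/
def Fc (k : Kernel Θ ℝ) (θ : Θ) (x : ℝ) : ℝ := (k θ (Iic x)).toReal

/-- The quantile (generalized inverse CDF). -/
def Qu (k : Kernel Θ ℝ) (θ : Θ) (u : ℝ) : ℝ := sInf {x | u ≤ Fc k θ x}

variable (k : Kernel Θ ℝ) [IsMarkovKernel k] (θ : Θ)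

lemma Fc_mono : Monotone (Fc k θ) := fun x y hxy =>
  ENNReal.toReal_mono (measure_ne_top _ _) (measure_mono (Iic_subset_Iic.mpr hxy))

omit [IsMarkovKernel k] in
lemma Fc_nonneg (x : ℝ) : 0 ≤ Fc k θ x := ENNReal.toReal_nonneg

lemma Fc_le_one (x : ℝ) : Fc k θ x ≤ 1 := by
  have h : k θ (Iic x) ≤ 1 := prob_le_one
  calc (k θ (Iic x)).toReal ≤ (1 : ℝ≥0∞).toReal := ENNReal.toReal_mono (by simp) h
  _ = 1 := by simp

lemma exists_Fc_ge {c : ℝ} (hc : c < 1) : ∃ x, c ≤ Fc k θ x := by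
  have h := tendsto_measure_Iic_atTop (k θ)
  rw [measure_univ] at h
  have h2 : Tendsto (Fc k θ) atTop (𝓝 1) := by
    have h3 := (ENNReal.tendsto_toReal (by simp : (1:ℝ≥0∞) ≠ ⊤)).comp h
    exact h3
  exact (h2.eventually (eventually_ge_nhds hc)).exists

lemma exists_Fc_lt {c : ℝ} (hc : 0 < c) : ∃ x, Fc k θ x < c := by
  by_contra hcon
  push_neg at hcon
  have hInter : ⋂ n : ℕ, Iic (-(n:ℝ)) = (∅ : Set ℝ) := by
    ext x
    simp only [mem_iInter, mem_Iic, mem_empty_iff_false, iff_false, not_forall, not_le]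
    obtain ⟨n, hn⟩ := exists_nat_gt (-x)
    exact ⟨n, by linarith⟩
  have hd : Directed (· ⊇ ·) (fun n : ℕ => Iic (-(n:ℝ))) := by
    intro m n
    refine ⟨max m n, Iic_subset_Iic.mpr (by simp), Iic_subset_Iic.mpr (by simp)⟩
  have h := Directed.measure_iInter (μ := k θ)
    (fun n => measurableSet_Iic.nullMeasurableSet) hd ⟨0, measure_ne_top _ _⟩
  rw [hInter, measure_empty] at h
  have hlow : ∀ n : ℕ, ENNReal.ofReal c ≤ k θ (Iic (-(n:ℝ))) := by
    intro n
    have := hcon (-(n:ℝ))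
    rw [Fc] at this
    calc ENNReal.ofReal c ≤ ENNReal.ofReal ((k θ (Iic (-(n:ℝ)))).toReal) :=
          ENNReal.ofReal_le_ofReal this
      _ = k θ (Iic (-(n:ℝ))) := ENNReal.ofReal_toReal (measure_ne_top _ _)
  have hle2 : ENNReal.ofReal c ≤ 0 := h ▸ le_iInf hlow
  simp only [nonpos_iff_eq_zero, ENNReal.ofReal_eq_zero] at hle2
  linarith

lemma Fc_iInf (a : ℝ) :
    k θ (Iic a) = ⨅ n : ℕ, k θ (Iic (a + ((n:ℝ)+1)⁻¹)) := by
  have hIic : Iic a = ⋂ n : ℕ, Iic (a + ((n:ℝ)+1)⁻¹) := by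
    ext x
    simp only [mem_Iic, mem_iInter]
    constructor
    · intro hx n
      have hpos : (0:ℝ) ≤ ((n:ℝ)+1)⁻¹ := by positivity
      linarith
    · intro hx
      by_contra hlt
      push_neg at hlt
      obtain ⟨n, hn⟩ := exists_nat_one_div_lt (by linarith : 0 < x - a)
      have h2 := hx n
      rw [one_div] at hn
      linarith
  rw [hIic]
  refine Directed.measure_iInter (fun n => measurableSet_Iic.nullMeasurableSet) ?_
    ⟨0, measure_ne_top _ _⟩
  intro m n
  have hmax : ∀ l : ℕ, l ≤ max m n →
      Iic (a + (((max m n : ℕ):ℝ)+1)⁻¹) ⊆ Iic (a + ((l:ℝ)+1)⁻¹) := by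
    intro l hl
    apply Iic_subset_Iic.mpr
    have hcast : ((l:ℝ)+1) ≤ (((max m n : ℕ):ℝ)+1) := by
      have : (l:ℝ) ≤ ((max m n : ℕ):ℝ) := by exact_mod_cast hl
      linarith
    have hinv : (((max m n : ℕ):ℝ)+1)⁻¹ ≤ ((l:ℝ)+1)⁻¹ := by
      apply inv_anti₀ (by positivity) hcast
    linarith
  exact ⟨max m n, hmax m (le_max_left m n), hmax n (le_max_right m n)⟩

/-- Key property of the quantile: for `0 < u < 1`, `Qu ≤ x ↔ u ≤ F x`. -/
lemma Qu_le_iff {u : ℝ} (hu0 : 0 < u) (hu1 : u < 1) (x : ℝ) :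
    Qu k θ u ≤ x ↔ u ≤ Fc k θ x := by
  set S := {x | u ≤ Fc k θ x} with hS
  have hne : S.Nonempty := by
    obtain ⟨x₀, hx₀⟩ := exists_Fc_ge k θ hu1
    exact ⟨x₀, hx₀⟩
  have hbdd : BddBelow S := by
    obtain ⟨x₀, hx₀⟩ := exists_Fc_lt k θ hu0
    refine ⟨x₀, fun y hy => ?_⟩
    by_contra hlt
    push_neg at hlt
    have h1 : Fc k θ y ≤ Fc k θ x₀ := Fc_mono k θ hlt.le
    have h2 : u ≤ Fc k θ y := hy
    linarith
  have hup : ∀ y z, y ∈ S → y ≤ z → z ∈ S := fun y z hy hyz =>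
    le_trans hy (Fc_mono k θ hyz)
  have hmem : sInf S ∈ S := by
    have h1 : ∀ n : ℕ, u ≤ Fc k θ (sInf S + ((n:ℝ)+1)⁻¹) := by
      intro n
      have hlt : sInf S < sInf S + ((n:ℝ)+1)⁻¹ := by
        have hpos : (0:ℝ) < ((n:ℝ)+1)⁻¹ := by positivity
        linarith
      obtain ⟨y, hyS, hy⟩ := exists_lt_of_csInf_lt hne hlt
      exact hup y _ hyS hy.le
    show u ≤ Fc k θ (sInf S)
    rw [Fc, Fc_iInf k θ (sInf S),
      ENNReal.toReal_iInf (fun n => measure_ne_top _ _)]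
    exact le_ciInf (fun n => h1 n)
  constructor
  · intro h
    exact hup _ _ hmem h
  · intro h
    exact csInf_le hbdd h

omit [IsMarkovKernel k] in
lemma Qu_zero_of_nonpos {u : ℝ} (hu : u ≤ 0) : Qu k θ u = 0 := by
  have hset : {x | u ≤ Fc k θ x} = univ := by
    ext x; simp only [mem_setOf_eq, mem_univ, iff_true]
    exact le_trans hu (Fc_nonneg k θ x)
  rw [Qu, hset]
  have hnb : ¬ BddBelow (univ : Set ℝ) := by
    rw [not_bddBelow_iff]
    intro y
    exact ⟨y - 1, mem_univ _, by linarith⟩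
  rw [csInf_of_not_bddBelow hnb, Real.sInf_empty]

omit [IsMarkovKernel k] in
lemma measurable_Fc (x : ℝ) : Measurable (fun θ => Fc k θ x) :=
  (Kernel.measurable_coe k measurableSet_Iic).ennreal_toReal

/-- Joint measurability of the randomization map. -/
lemma measurable_Qu_c2r :
    Measurable (fun q : Θ × S1 => Qu k q.1 (c2r q.2)) := by
  apply measurable_of_Iic
  intro x
  have hset : (fun q : Θ × S1 => Qu k q.1 (c2r q.2)) ⁻¹' Iic x
      = {q : Θ × S1 | 0 < c2r q.2 ∧ c2r q.2 ≤ Fc k q.1 x}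
        ∪ {q : Θ × S1 | c2r q.2 ≤ 0 ∧ (0:ℝ) ≤ x} := by
    ext ⟨θ', v⟩
    simp only [mem_preimage, mem_Iic, mem_union, mem_setOf_eq]
    rcases lt_or_ge 0 (c2r v) with hpos | hnon
    · have hlt1 : c2r v < 1 := (c2r_mem v).2
      rw [Qu_le_iff k θ' hpos hlt1 x]
      constructor
      · intro h; exact Or.inl ⟨hpos, h⟩
      · rintro (⟨-, h⟩ | ⟨h, -⟩)
        · exact h
        · linarith
    · have h0 : c2r v = 0 := le_antisymm hnon (c2r_mem v).1
      rw [h0, Qu_zero_of_nonpos k θ' (le_refl 0)]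
      constructor
      · intro h; exact Or.inr ⟨le_refl _, h⟩
      · rintro (⟨h, -⟩ | ⟨-, h⟩)
        · linarith
        · exact h
  rw [hset]
  apply MeasurableSet.union
  · exact MeasurableSet.inter
      (measurable_c2r.comp measurable_snd measurableSet_Ioi)
      (measurableSet_le (measurable_c2r.comp measurable_snd)
        ((measurable_Fc k x).comp measurable_fst))
  · exact MeasurableSet.inter
      (measurableSet_le (measurable_c2r.comp measurable_snd) measurable_const)
      (MeasurableSet.const _)

/-- Inverse transform sampling: the law of `Qu k θ (c2r ·)` under the circle measure is `k θ`. -/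
lemma map_Qu_c2r :
    Measure.map (fun v : S1 => Qu k θ (c2r v)) (volume : Measure S1) = k θ := by
  have hmeas : Measurable (fun v : S1 => Qu k θ (c2r v)) :=
    (measurable_Qu_c2r k).comp (measurable_prodMk_left : Measurable (Prod.mk θ))
  haveI : IsProbabilityMeasure (Measure.map (fun v : S1 => Qu k θ (c2r v)) volume) :=
    Measure.isProbabilityMeasure_map hmeas.aemeasurable
  refine Measure.ext_of_Iic _ _ (fun x => ?_)
  rw [Measure.map_apply hmeas measurableSet_Iic]
  have hsplit : volume ((fun v : S1 => Qu k θ (c2r v)) ⁻¹' Iic x)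
      = volume (c2r ⁻¹' {u | 0 < u ∧ u ≤ Fc k θ x}) := by
    have hsub1 : ((fun v : S1 => Qu k θ (c2r v)) ⁻¹' Iic x)
        \ (c2r ⁻¹' {u | 0 < u ∧ u ≤ Fc k θ x}) ⊆ {((0:ℝ) : S1)} := by
      intro v hv
      rcases hv with ⟨hv1, hv2⟩
      simp only [mem_preimage, mem_setOf_eq, not_and, not_le] at hv2
      rcases lt_or_ge 0 (c2r v) with hpos | hnon
      · exfalso
        have hlt1 : c2r v < 1 := (c2r_mem v).2
        rw [mem_preimage, mem_Iic, Qu_le_iff k θ hpos hlt1 x] at hv1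
        exact absurd hv1 (not_le.mpr (hv2 hpos))
      · have h0 : c2r v = 0 := le_antisymm hnon (c2r_mem v).1
        simp only [mem_singleton_iff]
        exact (c2r_eq_zero_iff v).mp h0
    have hsub2 : (c2r ⁻¹' {u | 0 < u ∧ u ≤ Fc k θ x})
        ⊆ ((fun v : S1 => Qu k θ (c2r v)) ⁻¹' Iic x) := by
      intro v hv
      simp only [mem_preimage, mem_setOf_eq] at hv
      rw [mem_preimage, mem_Iic, Qu_le_iff k θ hv.1 (c2r_mem v).2 x]
      exact hv.2
    apply le_antisymm
    · calc volume ((fun v : S1 => Qu k θ (c2r v)) ⁻¹' Iic x)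
          ≤ volume ((c2r ⁻¹' {u | 0 < u ∧ u ≤ Fc k θ x}) ∪ {((0:ℝ) : S1)}) := by
            apply measure_mono
            intro v hv
            by_cases hmem : v ∈ c2r ⁻¹' {u | 0 < u ∧ u ≤ Fc k θ x}
            · exact Or.inl hmem
            · exact Or.inr (hsub1 ⟨hv, hmem⟩)
        _ ≤ volume (c2r ⁻¹' {u | 0 < u ∧ u ≤ Fc k θ x}) + volume {((0:ℝ) : S1)} :=
            measure_union_le _ _
        _ = volume (c2r ⁻¹' {u | 0 < u ∧ u ≤ Fc k θ x}) := by
            rw [measure_singleton]; ring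
    · exact measure_mono hsub2
  rw [hsplit]
  have hms : MeasurableSet {u : ℝ | 0 < u ∧ u ≤ Fc k θ x} :=
    (measurableSet_Ioi.inter measurableSet_Iic)
  have hmc := congrArg (fun m : Measure ℝ => m {u | 0 < u ∧ u ≤ Fc k θ x}) map_c2r
  rw [← Measure.map_apply measurable_c2r hms]
  rw [hmc, Measure.restrict_apply hms]
  have hsetx : {u : ℝ | 0 < u ∧ u ≤ Fc k θ x} ∩ Ioo 0 1 = Ioc 0 (Fc k θ x) ∩ Ioo 0 1 := by
    ext u
    simp only [mem_inter_iff, mem_setOf_eq, mem_Ioc, mem_Ioo]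
  rw [hsetx]
  have hle : Fc k θ x ≤ 1 := Fc_le_one k θ x
  have h1 : volume (Ioc 0 (Fc k θ x) ∩ Ioo (0:ℝ) 1) ≤ ENNReal.ofReal (Fc k θ x) := by
    refine le_trans (measure_mono inter_subset_left) ?_
    rw [Real.volume_Ioc]
    simp
  have h2 : ENNReal.ofReal (Fc k θ x) ≤ volume (Ioc 0 (Fc k θ x) ∩ Ioo (0:ℝ) 1) := by
    have hsub : Ioo 0 (Fc k θ x) ⊆ Ioc 0 (Fc k θ x) ∩ Ioo (0:ℝ) 1 := by
      intro u hu
      exact ⟨⟨hu.1, hu.2.le⟩, hu.1, lt_of_lt_of_le hu.2 hle⟩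
    refine le_trans (le_of_eq ?_) (measure_mono hsub)
    rw [Real.volume_Ioo]
    simp
  have heq : volume (Ioc 0 (Fc k θ x) ∩ Ioo (0:ℝ) 1) = ENNReal.ofReal (Fc k θ x) :=
    le_antisymm h1 h2
  rw [heq, Fc, ENNReal.ofReal_toReal (measure_ne_top _ _)]


end Stmt19Aux
end
end Stmt19AuxSection

open Stmt19Aux Set in
set_option maxHeartbeats 1000000 in

/-- If `(X, X̃)` is a conditional independence knockoff pair, i.e. its joint law has the
mixture representation `∫_Θ ∏ᵢ Pᵢ(Aᵢ∣θ) Pᵢ(Bᵢ∣θ) γ(dθ)`, then there exists an infinite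
sequence `V = (V₀, V₁, …)` of real random variables with `(V₀,…,V_{2p-1}) ∼ (X, X̃)` such
that for all `i < p` and `j, k ≥ 0`, swapping `V_{kp+i}` with `V_{jp+i}` leaves the law of
the whole sequence unchanged (partial exchangeability within residue classes mod `p`). -/
theorem stmt19 {Ω Θ : Type} [MeasurableSpace Ω] [MeasurableSpace Θ]
    (μ : Measure Ω) [IsProbabilityMeasure μ]
    (γ : Measure Θ) [IsProbabilityMeasure γ]
    (p : ℕ) (hp : 0 < p) (κ : Fin p → Kernel Θ ℝ) (hκ : ∀ i, IsMarkovKernel (κ i))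
    (X Xt : Ω → Fin p → ℝ) (hX : Measurable X) (hXt : Measurable Xt)
    (hrep : ∀ A B : Fin p → Set ℝ, (∀ i, MeasurableSet (A i)) → (∀ i, MeasurableSet (B i)) →
      μ {ω | X ω ∈ Set.univ.pi A ∧ Xt ω ∈ Set.univ.pi B}
        = ∫⁻ θ, ∏ i, κ i θ (A i) * κ i θ (B i) ∂γ) :
    ∃ (Ω' : Type) (_ : MeasurableSpace Ω') (μ' : Measure Ω') (_ : IsProbabilityMeasure μ')
      (V : ℕ → Ω' → ℝ),
      (∀ n, Measurable (V n)) ∧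
      (μ'.map (fun ω => ((fun i : Fin p => V i ω, fun i : Fin p => V (p + i) ω) :
            (Fin p → ℝ) × (Fin p → ℝ)))
        = μ.map (fun ω => ((X ω, Xt ω) : (Fin p → ℝ) × (Fin p → ℝ)))) ∧
      ∀ (i : Fin p) (j k : ℕ),
        μ'.map (fun ω => fun n => V (Equiv.swap (k * p + i) (j * p + i) n) ω)
          = μ'.map (fun ω => fun n => V n ω) := by
  classical
  haveI : ∀ i, IsMarkovKernel (κ i) := hκ
  set idx : ℕ → Fin p := fun n => ⟨n % p, Nat.mod_lt n hp⟩ with hidxdef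
  set V : ℕ → (Θ × Gn) → ℝ := fun n q => Qu (κ (idx n)) q.1 (c2r (q.2 n)) with hVdef
  have hVmeas : ∀ n, Measurable (V n) := by
    intro n
    exact (measurable_Qu_c2r (κ (idx n))).comp
      (measurable_fst.prodMk ((measurable_pi_apply n).comp measurable_snd))
  have hsecmeas : ∀ (i : Fin p) (θ : Θ), Measurable (fun v : S1 => Qu (κ i) θ (c2r v)) :=
    fun i θ => (measurable_Qu_c2r (κ i)).comp measurable_prodMk_left
  refine ⟨Θ × Gn, inferInstance, γ.prod muG, inferInstance, V, hVmeas, ?_, ?_⟩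
  · -- the first 2p coordinates have the law of (X, Xt)
    have hTmeas : Measurable (fun q : Θ × Gn =>
        ((fun i : Fin p => V i q, fun i : Fin p => V (p + i) q) : (Fin p → ℝ) × (Fin p → ℝ))) :=
      Measurable.prodMk (measurable_pi_lambda _ fun i => hVmeas _)
        (measurable_pi_lambda _ fun i => hVmeas _)
    have hXXt : Measurable (fun ω => ((X ω, Xt ω) : (Fin p → ℝ) × (Fin p → ℝ))) :=
      hX.prodMk hXt
    haveI : IsProbabilityMeasure ((γ.prod muG).map (fun q : Θ × Gn =>
        ((fun i : Fin p => V i q, fun i : Fin p => V (p + i) q) :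
          (Fin p → ℝ) × (Fin p → ℝ)))) := Measure.isProbabilityMeasure_map hTmeas.aemeasurable
    haveI : IsProbabilityMeasure (μ.map (fun ω => ((X ω, Xt ω) :
        (Fin p → ℝ) × (Fin p → ℝ)))) := Measure.isProbabilityMeasure_map hXXt.aemeasurable
    set C : Set (Set (Fin p → ℝ)) :=
      Set.pi univ '' Set.pi univ (fun _ : Fin p => {s : Set ℝ | MeasurableSet s}) with hCdef
    have hCspan : IsCountablySpanning C := by
      refine ⟨fun _ => univ, fun _ => ⟨fun _ => univ, fun i _ => ?_, by simp⟩, ?_⟩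
      · simp
      · exact iUnion_const _
    have hgen : (inferInstance : MeasurableSpace ((Fin p → ℝ) × (Fin p → ℝ)))
        = MeasurableSpace.generateFrom (Set.image2 (· ×ˢ ·) C C) :=
      (generateFrom_eq_prod generateFrom_pi generateFrom_pi hCspan hCspan).symm
    refine ext_of_generate_finite _ hgen
      (IsPiSystem.prod isPiSystem_pi isPiSystem_pi) ?_ (by simp)
    rintro s ⟨s₁, ⟨A, hA, rfl⟩, s₂, ⟨B, hB, rfl⟩, rfl⟩
    have hA' : ∀ i, MeasurableSet (A i) := fun i => hA i (mem_univ i)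
    have hB' : ∀ i, MeasurableSet (B i) := fun i => hB i (mem_univ i)
    -- RHS
    have hRHS : (μ.map (fun ω => ((X ω, Xt ω) : (Fin p → ℝ) × (Fin p → ℝ))))
        ((univ.pi A) ×ˢ (univ.pi B))
        = ∫⁻ θ, ∏ i, κ i θ (A i) * κ i θ (B i) ∂γ := by
      rw [Measure.map_apply hXXt
        ((MeasurableSet.univ_pi (fun i => hA' i)).prod (MeasurableSet.univ_pi (fun i => hB' i)))]
      rw [← hrep A B hA' hB']
      congr 1
    rw [hRHS]
    -- LHS
    rw [Measure.map_apply hTmeas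
      ((MeasurableSet.univ_pi (fun i => hA' i)).prod (MeasurableSet.univ_pi (fun i => hB' i)))]
    have hpre : (fun q : Θ × Gn =>
          ((fun i : Fin p => V i q, fun i : Fin p => V (p + i) q) :
            (Fin p → ℝ) × (Fin p → ℝ))) ⁻¹' ((univ.pi A) ×ˢ (univ.pi B))
        = (⋂ i : Fin p, V (i : ℕ) ⁻¹' A i) ∩ (⋂ i : Fin p, V (p + (i : ℕ)) ⁻¹' B i) := by
      ext q
      simp only [mem_preimage, Set.mem_prod, Set.mem_pi, mem_univ, forall_true_left,
        mem_inter_iff, mem_iInter, true_implies]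
    rw [hpre]
    have hsetmeas : MeasurableSet
        ((⋂ i : Fin p, V (i : ℕ) ⁻¹' A i) ∩ (⋂ i : Fin p, V (p + (i : ℕ)) ⁻¹' B i)) := by
      refine MeasurableSet.inter ?_ ?_
      · exact MeasurableSet.iInter (fun i => (hVmeas _) (hA' i))
      · exact MeasurableSet.iInter (fun i => (hVmeas _) (hB' i))
    rw [Measure.prod_apply hsetmeas]
    refine lintegral_congr (fun θ => ?_)
    -- inner computation at fixed θ
    set Cs : Fin (p + p) → Set S1 := fun m =>
      Fin.addCases (fun i => (fun v : S1 => Qu (κ i) θ (c2r v)) ⁻¹' A i)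
        (fun i => (fun v : S1 => Qu (κ i) θ (c2r v)) ⁻¹' B i) m with hCs
    have hCsmeas : ∀ m, MeasurableSet (Cs m) := by
      intro m
      refine Fin.addCases (motive := fun m => MeasurableSet (Cs m)) ?_ ?_ m
      · intro i
        simp only [hCs, Fin.addCases_left]
        exact (hsecmeas i θ) (hA' i)
      · intro i
        simp only [hCs, Fin.addCases_right]
        exact (hsecmeas i θ) (hB' i)
    have hidx1 : ∀ i : Fin p, idx (i : ℕ) = i := by
      intro i
      apply Fin.ext
      simp [hidxdef, Nat.mod_eq_of_lt i.isLt]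
    have hidx2 : ∀ i : Fin p, idx (p + (i : ℕ)) = i := by
      intro i
      apply Fin.ext
      simp [hidxdef, Nat.add_mod_left, Nat.mod_eq_of_lt i.isLt]
    have hprei : Prod.mk θ ⁻¹'
          ((⋂ i : Fin p, V (i : ℕ) ⁻¹' A i) ∩ (⋂ i : Fin p, V (p + (i : ℕ)) ⁻¹' B i))
        = (fun ω : Gn => fun m : Fin (p + p) => ω (m : ℕ)) ⁻¹' (univ.pi Cs) := by
      ext ω
      simp only [mem_preimage, mem_inter_iff, mem_iInter, Set.mem_pi, mem_univ, true_implies]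
      constructor
      · rintro ⟨h1, h2⟩ m
        refine Fin.addCases (motive := fun m => (fun m : Fin (p+p) => ω (m:ℕ)) m ∈ Cs m) ?_ ?_ m
        · intro i
          simp only [hCs, Fin.addCases_left, mem_preimage, Fin.coe_castAdd]
          have := h1 i
          rw [hVdef] at this
          simp only [hidx1 i] at this
          exact this
        · intro i
          simp only [hCs, Fin.addCases_right, mem_preimage, Fin.coe_natAdd]
          have := h2 i
          rw [hVdef] at this
          simp only [hidx2 i] at this
          exact this
      · intro h
        constructor
        · intro i
          have := h (Fin.castAdd p i)
          simp only [hCs, Fin.addCases_left, mem_preimage, Fin.coe_castAdd] at this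
          rw [hVdef]
          simp only [hidx1 i]
          exact this
        · intro i
          have := h (Fin.natAdd p i)
          simp only [hCs, Fin.addCases_right, mem_preimage, Fin.coe_natAdd] at this
          rw [hVdef]
          simp only [hidx2 i]
          exact this
    rw [hprei]
    have hprojmeas : Measurable (fun ω : Gn => fun m : Fin (p + p) => ω (m : ℕ)) :=
      measurable_pi_lambda _ fun m => measurable_pi_apply _
    rw [← Measure.map_apply hprojmeas (MeasurableSet.univ_pi hCsmeas), muG_marginal (p + p),
      Measure.pi_pi]
    rw [Fin.prod_univ_add]
    have hAval : ∀ i : Fin p, volume (Cs (Fin.castAdd p i)) = κ i θ (A i) := by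
      intro i
      simp only [hCs, Fin.addCases_left]
      rw [← Measure.map_apply (hsecmeas i θ) (hA' i), map_Qu_c2r (κ i) θ]
    have hBval : ∀ i : Fin p, volume (Cs (Fin.natAdd p i)) = κ i θ (B i) := by
      intro i
      simp only [hCs, Fin.addCases_right]
      rw [← Measure.map_apply (hsecmeas i θ) (hB' i), map_Qu_c2r (κ i) θ]
    rw [Finset.prod_congr rfl (fun i _ => hAval i), Finset.prod_congr rfl (fun i _ => hBval i),
      ← Finset.prod_mul_distrib]
  · -- swap invariance
    intro i j k
    set σ : Equiv.Perm ℕ := Equiv.swap (k * p + i) (j * p + i) with hσ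
    have hmod : ∀ n, (σ n) % p = n % p := by
      intro n
      rcases eq_or_ne n (k * p + (i:ℕ)) with rfl | h1
      · rw [hσ, Equiv.swap_apply_left]
        simp [Nat.add_mod, Nat.mul_mod_left]
      · rcases eq_or_ne n (j * p + (i:ℕ)) with rfl | h2
        · rw [hσ, Equiv.swap_apply_right]
          simp [Nat.add_mod, Nat.mul_mod_left]
        · rw [hσ, Equiv.swap_apply_of_ne_of_ne h1 h2]
    have hidxeq : ∀ n, idx (σ n) = idx n := fun n => Fin.ext (by simp [hidxdef, hmod n])
    have hfun : (fun q : Θ × Gn => fun n => V (σ n) q)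
        = (fun q : Θ × Gn => fun n => V n q) ∘ (fun q : Θ × Gn => (q.1, q.2 ∘ σ)) := by
      funext q
      funext n
      simp only [Function.comp_apply, hVdef]
      rw [hidxeq n]
    have hVseq : Measurable (fun q : Θ × Gn => fun n => V n q) :=
      measurable_pi_lambda _ fun n => hVmeas n
    have hpermmeas : Measurable (fun ω : Gn => ω ∘ σ) :=
      measurable_pi_lambda _ fun n => measurable_pi_apply _
    have htw : Measurable (fun q : Θ × Gn => (q.1, q.2 ∘ σ)) :=
      measurable_fst.prodMk (hpermmeas.comp measurable_snd)
    rw [hfun, ← Measure.map_map hVseq htw]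
    congr 1
    have heq : (fun q : Θ × Gn => (q.1, q.2 ∘ σ)) = Prod.map id (fun ω : Gn => ω ∘ σ) := rfl
    rw [heq, ← Measure.map_prod_map _ _ measurable_id hpermmeas, Measure.map_id,
      muG_comp_perm σ]
end
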